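/- arXiv:1906.08530 — 8 statements merged into one kernel-verified Lean document; each statement's English description precedes it below -/
import Mathlib

section
/- Let π(θ) ∝ exp(-f(θ)) be a probability density on ℝ^p with finite second moment μ₂, and for α > 0 let π_α(θ) ∝ exp(-f(θ) - α‖θ‖₂²/2). Then the total variation distance satisfies d_TV(π, π_α) ≤ α μ₂. -/
open MeasureTheory Real

/-- Let pd(θ) ∝ exp(-f θ) be a probability density on ℝ^p with
finite second moment μ₂, and for α > 0 let pdα(θ) ∝ exp(-f θ - α‖θ‖²/2).
Then the total variation distance (half the L¹ distance of the densities)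
satisfies d_TV(pd, pdα) ≤ α μ₂. -/
theorem stmt1 {p : ℕ} (f : EuclideanSpace ℝ (Fin p) → ℝ)
    (pd pdα : EuclideanSpace ℝ (Fin p) → ℝ) (α : ℝ) (hα : 0 < α)
    (hf_int : Integrable (fun θ => Real.exp (-f θ)))
    (hpd : ∀ θ, pd θ = Real.exp (-f θ) / ∫ θ', Real.exp (-f θ'))
    (hpdα : ∀ θ, pdα θ =
      Real.exp (-f θ - α * ‖θ‖ ^ 2 / 2)
        / ∫ θ', Real.exp (-f θ' - α * ‖θ'‖ ^ 2 / 2))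
    (hμ₂_int : Integrable (fun θ => ‖θ‖ ^ 2 * pd θ)) :
    (1 / 2) * ∫ θ, |pd θ - pdα θ| ≤ α * ∫ θ, ‖θ‖ ^ 2 * pd θ := by
  set Z : ℝ := ∫ θ', Real.exp (-f θ') with hZ
  set Zα : ℝ := ∫ θ', Real.exp (-f θ' - α * ‖θ'‖ ^ 2 / 2) with hZα
  have hnn : ∀ θ : EuclideanSpace ℝ (Fin p), 0 ≤ α * ‖θ‖ ^ 2 / 2 := by
    intro θ; positivity
  -- integrability of tilted exponential
  have hg_int : Integrable (fun θ : EuclideanSpace ℝ (Fin p) =>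
      Real.exp (-f θ - α * ‖θ‖ ^ 2 / 2)) := by
    have hsm : AEStronglyMeasurable
        (fun θ : EuclideanSpace ℝ (Fin p) => Real.exp (-f θ - α * ‖θ‖ ^ 2 / 2)) volume := by
      have : (fun θ : EuclideanSpace ℝ (Fin p) => Real.exp (-f θ - α * ‖θ‖ ^ 2 / 2))
          = fun θ => Real.exp (-f θ) * Real.exp (-(α * ‖θ‖ ^ 2 / 2)) := by
        funext θ; rw [← Real.exp_add]; ring_nf
      rw [this]
      exact hf_int.aestronglyMeasurable.mul
        (Continuous.aestronglyMeasurable (by continuity))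
    refine hf_int.mono hsm (Filter.Eventually.of_forall fun θ => ?_)
    rw [Real.norm_eq_abs, Real.norm_eq_abs, abs_of_nonneg (Real.exp_pos _).le,
      abs_of_nonneg (Real.exp_pos _).le]
    exact Real.exp_le_exp.2 (by linarith [hnn θ])
  -- positivity of the normalizing constants
  have hZpos : 0 < Z := by
    rw [hZ, MeasureTheory.integral_pos_iff_support_of_nonneg_ae
      (Filter.Eventually.of_forall fun θ => (Real.exp_pos _).le) hf_int]
    have : Function.support (fun θ : EuclideanSpace ℝ (Fin p) => Real.exp (-f θ)) = Set.univ := by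
      ext θ; simp [Function.mem_support, (Real.exp_pos _).ne']
    rw [this]
    exact isOpen_univ.measure_pos volume Set.univ_nonempty
  have hZαpos : 0 < Zα := by
    rw [hZα, MeasureTheory.integral_pos_iff_support_of_nonneg_ae
      (Filter.Eventually.of_forall fun θ => (Real.exp_pos _).le) hg_int]
    have : Function.support (fun θ : EuclideanSpace ℝ (Fin p) =>
        Real.exp (-f θ - α * ‖θ‖ ^ 2 / 2)) = Set.univ := by
      ext θ; simp [Function.mem_support, (Real.exp_pos _).ne']
    rw [this]
    exact isOpen_univ.measure_pos volume Set.univ_nonempty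
  have hZαZ : Zα ≤ Z := by
    rw [hZ, hZα]
    refine integral_mono hg_int hf_int fun θ => ?_
    exact Real.exp_le_exp.2 (by linarith [hnn θ])
  -- integrability and total mass of the densities
  have hpd_int : Integrable pd := by
    have : pd = fun θ => Real.exp (-f θ) / Z := funext hpd
    rw [this]; exact hf_int.div_const Z
  have hpdα_int : Integrable pdα := by
    have : pdα = fun θ => Real.exp (-f θ - α * ‖θ‖ ^ 2 / 2) / Zα := funext hpdα
    rw [this]; exact hg_int.div_const Zα
  have hpd_mass : ∫ θ, pd θ = 1 := by
    simp only [hpd]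
    rw [integral_div, div_self hZpos.ne']
  have hpdα_mass : ∫ θ, pdα θ = 1 := by
    simp only [hpdα]
    rw [integral_div, div_self hZαpos.ne']
  -- pointwise key bound on the positive part
  have hkey : ∀ θ, max (pd θ - pdα θ) 0 ≤ α / 2 * (‖θ‖ ^ 2 * pd θ) := by
    intro θ
    have hpdnn : 0 ≤ pd θ := by rw [hpd]; positivity
    have hrhs : 0 ≤ α / 2 * (‖θ‖ ^ 2 * pd θ) := by positivity
    refine max_le ?_ hrhs
    have h1 : pd θ * Real.exp (-(α * ‖θ‖ ^ 2 / 2)) ≤ pdα θ := by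
      rw [hpd, hpdα]
      have : Real.exp (-f θ) / Z * Real.exp (-(α * ‖θ‖ ^ 2 / 2))
          = Real.exp (-f θ - α * ‖θ‖ ^ 2 / 2) / Z := by
        rw [div_mul_eq_mul_div, ← Real.exp_add]; ring_nf
      rw [this]
      exact div_le_div_of_nonneg_left (Real.exp_pos _).le hZαpos hZαZ
    have h2 : 1 - α * ‖θ‖ ^ 2 / 2 ≤ Real.exp (-(α * ‖θ‖ ^ 2 / 2)) := by
      have := Real.add_one_le_exp (-(α * ‖θ‖ ^ 2 / 2))
      linarith
    nlinarith [mul_le_mul_of_nonneg_left h2 hpdnn]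
  have hmax_int : Integrable (fun θ => max (pd θ - pdα θ) 0) :=
    (hpd_int.sub hpdα_int).pos_part
  -- |x| = 2 max x 0 - x
  have habs : ∀ θ, |pd θ - pdα θ| = 2 * max (pd θ - pdα θ) 0 - (pd θ - pdα θ) := by
    intro θ
    rcases le_total (pd θ - pdα θ) 0 with h | h
    · rw [abs_of_nonpos h, max_eq_right h]; ring
    · rw [abs_of_nonneg h, max_eq_left h]; ring
  have hint_abs : ∫ θ, |pd θ - pdα θ| = 2 * ∫ θ, max (pd θ - pdα θ) 0 := by
    have hsub_int : Integrable (fun θ => pd θ - pdα θ) volume := hpd_int.sub hpdα_int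
    simp only [habs]
    rw [integral_sub ((hmax_int.const_mul 2)) hsub_int,
      integral_sub hpd_int hpdα_int, hpd_mass, hpdα_mass, integral_const_mul]
    ring
  have hle : ∫ θ, max (pd θ - pdα θ) 0 ≤ α / 2 * ∫ θ, ‖θ‖ ^ 2 * pd θ := by
    rw [← integral_const_mul]
    exact integral_mono hmax_int (hμ₂_int.const_mul (α / 2)) hkey
  have hM : 0 ≤ ∫ θ, ‖θ‖ ^ 2 * pd θ := by
    refine integral_nonneg fun θ => ?_
    have : 0 ≤ pd θ := by rw [hpd]; positivity
    positivity
  rw [hint_abs]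
  nlinarith
end

section
/- With π, π_α and μ₂ as above, the Kullback–Leibler divergence satisfies D_KL(π ‖ π_α) ≤ α² μ₄ / 8, where μ₄ = E_{θ∼π}[‖θ‖₂⁴]. -/
open MeasureTheory Real

lemma exp_neg_le_quad {x : ℝ} (hx : 0 ≤ x) : Real.exp (-x) ≤ 1 - x + x ^ 2 / 2 := by
  have h := Real.quadratic_le_exp_of_nonneg hx
  have hpos : (0:ℝ) < 1 - x + x ^ 2 / 2 := by nlinarith [sq_nonneg (x - 1)]
  have key : 1 ≤ (1 - x + x ^ 2 / 2) * Real.exp x := by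
    have h2 := mul_le_mul_of_nonneg_left h hpos.le
    nlinarith [sq_nonneg x, sq_nonneg (x^2)]
  rw [Real.exp_neg, inv_eq_one_div, div_le_iff₀ (Real.exp_pos x)]
  linarith

/-- With pd ∝ e^{-f}, pdα ∝ e^{-f - α‖·‖²/2} and μ₄ the fourth
moment of pd, the Kullback–Leibler divergence satisfies
D_KL(pd ‖ pdα) ≤ α² μ₄ / 8. -/
theorem stmt2 {p : ℕ} (f : EuclideanSpace ℝ (Fin p) → ℝ)
    (pd pdα : EuclideanSpace ℝ (Fin p) → ℝ) (α : ℝ) (hα : 0 < α)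
    (hf_int : Integrable (fun θ => Real.exp (-f θ)))
    (hpd : ∀ θ, pd θ = Real.exp (-f θ) / ∫ θ', Real.exp (-f θ'))
    (hpdα : ∀ θ, pdα θ =
      Real.exp (-f θ - α * ‖θ‖ ^ 2 / 2)
        / ∫ θ', Real.exp (-f θ' - α * ‖θ'‖ ^ 2 / 2))
    (hμ₄_int : Integrable (fun θ => ‖θ‖ ^ 4 * pd θ))
    (hKL_int : Integrable (fun θ => pd θ * Real.log (pd θ / pdα θ))) :
    ∫ θ, pd θ * Real.log (pd θ / pdα θ)
      ≤ α ^ 2 * (∫ θ, ‖θ‖ ^ 4 * pd θ) / 8 := by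
  set Z : ℝ := ∫ θ', Real.exp (-f θ') with hZdef
  set Zα : ℝ := ∫ θ', Real.exp (-f θ' - α * ‖θ'‖ ^ 2 / 2) with hZαdef
  -- positivity of Z
  have hZ : 0 < Z := by
    rw [hZdef, integral_pos_iff_support_of_nonneg
      (fun θ => (Real.exp_pos _).le) hf_int]
    have hs : Function.support (fun θ : EuclideanSpace ℝ (Fin p) =>
        Real.exp (-f θ)) = Set.univ := by
      ext θ; simp [Real.exp_ne_zero]
    rw [hs]
    exact isOpen_univ.measure_pos _ Set.univ_nonempty
  -- integrability of the tilted density numerator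
  have hmeas : AEStronglyMeasurable
      (fun θ : EuclideanSpace ℝ (Fin p) =>
        Real.exp (-f θ - α * ‖θ‖ ^ 2 / 2)) volume := by
    have h2 : Continuous fun θ : EuclideanSpace ℝ (Fin p) =>
        Real.exp (-(α * ‖θ‖ ^ 2 / 2)) := by continuity
    refine (hf_int.aestronglyMeasurable.mul h2.aestronglyMeasurable).congr
      (Filter.Eventually.of_forall fun θ => ?_)
    simp only [Pi.mul_apply]
    rw [← Real.exp_add]; ring_nf
  have hgα_int : Integrable
      (fun θ : EuclideanSpace ℝ (Fin p) =>
        Real.exp (-f θ - α * ‖θ‖ ^ 2 / 2)) := by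
    refine hf_int.mono' hmeas (Filter.Eventually.of_forall fun θ => ?_)
    rw [Real.norm_eq_abs, abs_of_pos (Real.exp_pos _)]
    apply Real.exp_le_exp.mpr
    have : 0 ≤ α * ‖θ‖ ^ 2 / 2 := by positivity
    linarith
  have hZα : 0 < Zα := by
    rw [hZαdef, integral_pos_iff_support_of_nonneg
      (fun θ => (Real.exp_pos _).le) hgα_int]
    have hs : Function.support (fun θ : EuclideanSpace ℝ (Fin p) =>
        Real.exp (-f θ - α * ‖θ‖ ^ 2 / 2)) = Set.univ := by
      ext θ; simp [Real.exp_ne_zero]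
    rw [hs]
    exact isOpen_univ.measure_pos _ Set.univ_nonempty
  -- pd is integrable with total mass one
  have hpd_int : Integrable pd :=
    (hf_int.div_const Z).congr (Filter.Eventually.of_forall fun θ => (hpd θ).symm)
  have hpd_one : ∫ θ, pd θ = 1 := by
    simp only [hpd]
    rw [integral_div]
    exact div_self hZ.ne'
  -- integrability of moment integrands against e^{-f}
  have hI4_int : Integrable
      (fun θ : EuclideanSpace ℝ (Fin p) => ‖θ‖ ^ 4 * Real.exp (-f θ)) := by
    refine (hμ₄_int.const_mul Z).congr (Filter.Eventually.of_forall fun θ => ?_)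
    show Z * (‖θ‖ ^ 4 * pd θ) = ‖θ‖ ^ 4 * Real.exp (-f θ)
    rw [hpd θ]
    field_simp
  have hI2_int : Integrable
      (fun θ : EuclideanSpace ℝ (Fin p) => ‖θ‖ ^ 2 * Real.exp (-f θ)) := by
    have hm : AEStronglyMeasurable
        (fun θ : EuclideanSpace ℝ (Fin p) => ‖θ‖ ^ 2 * Real.exp (-f θ)) volume :=
      ((continuous_norm.pow 2).aestronglyMeasurable).mul hf_int.aestronglyMeasurable
    refine (hf_int.add hI4_int).mono' hm (Filter.Eventually.of_forall fun θ => ?_)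
    simp only [Pi.add_apply]
    have h1 : (0:ℝ) < Real.exp (-f θ) := Real.exp_pos _
    rw [Real.norm_eq_abs, abs_of_nonneg (by positivity)]
    have ht : ‖θ‖ ^ 2 ≤ 1 + ‖θ‖ ^ 4 := by nlinarith [sq_nonneg (‖θ‖ ^ 2 - 1)]
    nlinarith [mul_le_mul_of_nonneg_right ht h1.le]
  have h2pd_int : Integrable
      (fun θ : EuclideanSpace ℝ (Fin p) => ‖θ‖ ^ 2 * pd θ) := by
    refine (hI2_int.div_const Z).congr (Filter.Eventually.of_forall fun θ => ?_)
    show ‖θ‖ ^ 2 * Real.exp (-f θ) / Z = ‖θ‖ ^ 2 * pd θ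
    rw [hpd θ]; ring
  -- pointwise decomposition of the KL integrand
  have hlog : ∀ θ, pd θ * Real.log (pd θ / pdα θ)
      = (α / 2) * (‖θ‖ ^ 2 * pd θ) + (Real.log Zα - Real.log Z) * pd θ := by
    intro θ
    have he := Real.exp_ne_zero (-f θ)
    have hx := Real.exp_ne_zero (α * ‖θ‖ ^ 2 / 2)
    have h1 : pd θ / pdα θ = Real.exp (α * ‖θ‖ ^ 2 / 2) * (Zα / Z) := by
      rw [hpd θ, hpdα θ, Real.exp_sub]
      field_simp
    rw [h1, Real.log_mul (Real.exp_ne_zero _) (div_ne_zero hZα.ne' hZ.ne'),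
      Real.log_exp, Real.log_div hZα.ne' hZ.ne', hpd θ]
    ring
  -- value of the KL integral
  have hKL : ∫ θ, pd θ * Real.log (pd θ / pdα θ)
      = (α / 2) * (∫ θ, ‖θ‖ ^ 2 * pd θ) + (Real.log Zα - Real.log Z) := by
    simp only [hlog]
    have ha : Integrable (fun θ : EuclideanSpace ℝ (Fin p) =>
        (α / 2) * (‖θ‖ ^ 2 * pd θ)) := h2pd_int.const_mul _
    have hb : Integrable (fun θ : EuclideanSpace ℝ (Fin p) =>
        (Real.log Zα - Real.log Z) * pd θ) := hpd_int.const_mul _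
    rw [integral_add ha hb, integral_const_mul, integral_const_mul,
      hpd_one, mul_one]
  -- log bound
  have hlog_le : Real.log Zα - Real.log Z ≤ Zα / Z - 1 := by
    rw [← Real.log_div hZα.ne' hZ.ne']
    exact Real.log_le_sub_one_of_pos (div_pos hZα hZ)
  -- quadratic bound on Zα
  set I2 : ℝ := ∫ θ, ‖θ‖ ^ 2 * Real.exp (-f θ) with hI2def
  set I4 : ℝ := ∫ θ, ‖θ‖ ^ 4 * Real.exp (-f θ) with hI4def
  have hZα_le : Zα ≤ Z - (α / 2) * I2 + (α ^ 2 / 8) * I4 := by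
    have hint : Integrable (fun θ : EuclideanSpace ℝ (Fin p) =>
        Real.exp (-f θ) - (α / 2) * (‖θ‖ ^ 2 * Real.exp (-f θ))
          + (α ^ 2 / 8) * (‖θ‖ ^ 4 * Real.exp (-f θ))) :=
      (hf_int.sub (hI2_int.const_mul _)).add (hI4_int.const_mul _)
    have hmono : ∀ θ : EuclideanSpace ℝ (Fin p),
        Real.exp (-f θ - α * ‖θ‖ ^ 2 / 2)
          ≤ Real.exp (-f θ) - (α / 2) * (‖θ‖ ^ 2 * Real.exp (-f θ))
            + (α ^ 2 / 8) * (‖θ‖ ^ 4 * Real.exp (-f θ)) := by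
      intro θ
      have hx : (0:ℝ) ≤ α * ‖θ‖ ^ 2 / 2 := by positivity
      have h := exp_neg_le_quad hx
      have he : Real.exp (-f θ - α * ‖θ‖ ^ 2 / 2)
          = Real.exp (-f θ) * Real.exp (-(α * ‖θ‖ ^ 2 / 2)) := by
        rw [← Real.exp_add]; ring_nf
      rw [he]
      have hepos := (Real.exp_pos (-f θ)).le
      calc Real.exp (-f θ) * Real.exp (-(α * ‖θ‖ ^ 2 / 2))
          ≤ Real.exp (-f θ)
              * (1 - α * ‖θ‖ ^ 2 / 2 + (α * ‖θ‖ ^ 2 / 2) ^ 2 / 2) :=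
            mul_le_mul_of_nonneg_left h hepos
        _ = _ := by ring
    calc Zα ≤ ∫ θ, (Real.exp (-f θ) - (α / 2) * (‖θ‖ ^ 2 * Real.exp (-f θ))
          + (α ^ 2 / 8) * (‖θ‖ ^ 4 * Real.exp (-f θ))) :=
        integral_mono hgα_int hint hmono
      _ = Z - (α / 2) * I2 + (α ^ 2 / 8) * I4 := by
        have ha : Integrable (fun θ : EuclideanSpace ℝ (Fin p) =>
            Real.exp (-f θ) - (α / 2) * (‖θ‖ ^ 2 * Real.exp (-f θ))) :=
          hf_int.sub (hI2_int.const_mul _)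
        have hb : Integrable (fun θ : EuclideanSpace ℝ (Fin p) =>
            (α ^ 2 / 8) * (‖θ‖ ^ 4 * Real.exp (-f θ))) := hI4_int.const_mul _
        have hc : Integrable (fun θ : EuclideanSpace ℝ (Fin p) =>
            (α / 2) * (‖θ‖ ^ 2 * Real.exp (-f θ))) := hI2_int.const_mul _
        rw [integral_add ha hb, integral_sub hf_int hc, integral_const_mul,
          integral_const_mul]
  -- moments of pd in terms of unnormalized integrals
  have hI2' : ∫ θ, ‖θ‖ ^ 2 * pd θ = I2 / Z := by
    have h : ∀ θ : EuclideanSpace ℝ (Fin p),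
        ‖θ‖ ^ 2 * pd θ = (‖θ‖ ^ 2 * Real.exp (-f θ)) / Z := fun θ => by
      rw [hpd θ]; ring
    simp only [h]
    rw [integral_div]
  have hI4' : ∫ θ, ‖θ‖ ^ 4 * pd θ = I4 / Z := by
    have h : ∀ θ : EuclideanSpace ℝ (Fin p),
        ‖θ‖ ^ 4 * pd θ = (‖θ‖ ^ 4 * Real.exp (-f θ)) / Z := fun θ => by
      rw [hpd θ]; ring
    simp only [h]
    rw [integral_div]
  -- assemble
  have h5 : Zα / Z ≤ (Z - (α / 2) * I2 + (α ^ 2 / 8) * I4) / Z := by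
    gcongr
  have hfinal : (α / 2) * (I2 / Z)
      + ((Z - (α / 2) * I2 + (α ^ 2 / 8) * I4) / Z - 1)
      = α ^ 2 * (I4 / Z) / 8 := by
    field_simp
    ring
  rw [hKL, hI2', hI4']
  linarith
end

section
/- For every B > 1, q ≥ 1 and every x ≥ (B/(B-1))(q-1), the upper incomplete Gamma function satisfies ∫_x^∞ y^{q-1} e^{-y} dy ≤ B x^{q-1} e^{-x}. -/
open MeasureTheory Set Real

/-- For every B > 1, q ≥ 1 and every x ≥ (B/(B-1))(q-1), the upper
incomplete Gamma function satisfies ∫_x^∞ y^{q-1} e^{-y} dy ≤ B x^{q-1} e^{-x}. -/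
theorem stmt6 (B q x : ℝ) (hB : 1 < B) (hq : 1 ≤ q)
    (hx : (B / (B - 1)) * (q - 1) ≤ x) :
    ∫ y in Set.Ioi x, y ^ (q - 1) * Real.exp (-y)
      ≤ B * x ^ (q - 1) * Real.exp (-x) := by
  have hB0 : 0 < B := lt_trans one_pos hB
  have hB1 : 0 < B - 1 := by linarith
  rcases eq_or_lt_of_le hq with hq1 | hq1
  · -- q = 1
    have hq0 : q - 1 = 0 := by linarith
    simp only [hq0, Real.rpow_zero, one_mul, mul_one]
    rw [integral_exp_neg_Ioi]
    nlinarith [Real.exp_pos (-x)]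
  · -- q > 1
    have hxpos : 0 < x :=
      lt_of_lt_of_le (mul_pos (div_pos hB0 hB1) (by linarith)) hx
    -- key coefficient inequality: (B-1)/B * x ≥ q - 1
    have hcx : q - 1 ≤ (B - 1) / B * x := by
      rw [div_mul_eq_mul_div, le_div_iff₀ hB0]
      rw [div_mul_eq_mul_div] at hx
      have := (div_le_iff₀ hB1).mp hx
      nlinarith [this]
    -- pointwise bound
    have hbound : ∀ y ∈ Ioi x, y ^ (q - 1) * Real.exp (-y)
        ≤ (x ^ (q - 1) * Real.exp (-((B - 1) / B * x))) * Real.exp (-B⁻¹ * y) := by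
      intro y hy
      have hyx : x < y := hy
      have hy0 : 0 < y := hxpos.trans hyx
      have hlog : (q - 1) * (Real.log y - Real.log x) ≤ (B - 1) / B * (y - x) := by
        have h1 : Real.log y - Real.log x = Real.log (y / x) := by
          rw [Real.log_div hy0.ne' hxpos.ne']
        have h2 : Real.log (y / x) ≤ y / x - 1 :=
          Real.log_le_sub_one_of_pos (by positivity)
        have h3 : (q - 1) * (Real.log y - Real.log x) ≤ (q - 1) * ((y - x) / x) := by
          rw [h1]
          have : y / x - 1 = (y - x) / x := by field_simp
          nlinarith [h2, this]
        refine h3.trans ?_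
        rw [mul_div_assoc']
        rw [div_le_iff₀ hxpos]
        nlinarith [hcx, sub_pos.mpr hyx, hB1, hxpos]
      have hyrw : y ^ (q - 1) = Real.exp ((q - 1) * Real.log y) := by
        rw [Real.rpow_def_of_pos hy0, mul_comm]
      have hxrw : x ^ (q - 1) = Real.exp ((q - 1) * Real.log x) := by
        rw [Real.rpow_def_of_pos hxpos, mul_comm]
      rw [hyrw, hxrw, ← Real.exp_add, ← Real.exp_add, ← Real.exp_add, Real.exp_le_exp]
      have hBsplit : -y = -((B-1)/B * y) + -B⁻¹ * y := by field_simp; ring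
      nlinarith [hlog]
    -- integrability
    have hInt1 : IntegrableOn (fun y => y ^ (q - 1) * Real.exp (-y)) (Ioi x) := by
      have := Real.GammaIntegral_convergent (by linarith : (0:ℝ) < q)
      have h2 : IntegrableOn (fun y => y ^ (q - 1) * Real.exp (-y)) (Ioi 0) := by
        simpa [mul_comm] using this
      exact h2.mono_set (Ioi_subset_Ioi hxpos.le)
    have hBinv : (0:ℝ) < B⁻¹ := inv_pos.mpr hB0
    have hInt2 : IntegrableOn
        (fun y => (x ^ (q - 1) * Real.exp (-((B - 1) / B * x))) * Real.exp (-B⁻¹ * y)) (Ioi x) := by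
      exact (exp_neg_integrableOn_Ioi x hBinv).const_mul _
    calc ∫ y in Ioi x, y ^ (q - 1) * Real.exp (-y)
        ≤ ∫ y in Ioi x, (x ^ (q - 1) * Real.exp (-((B - 1) / B * x))) * Real.exp (-B⁻¹ * y) :=
          setIntegral_mono_on hInt1 hInt2 measurableSet_Ioi hbound
      _ = (x ^ (q - 1) * Real.exp (-((B - 1) / B * x))) * ∫ y in Ioi x, Real.exp (-B⁻¹ * y) := by
          rw [integral_const_mul]
      _ = B * x ^ (q - 1) * Real.exp (-x) := by
          have hI : ∫ y in Ioi x, Real.exp (-B⁻¹ * y) = B * Real.exp (-B⁻¹ * x) := by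
            have h := integral_comp_mul_left_Ioi (fun z => Real.exp (-z)) x hBinv
            simp only [smul_eq_mul, inv_inv, integral_exp_neg_Ioi, neg_mul] at h ⊢
            exact h
          have h5 : Real.exp (-((B-1)/B * x)) * Real.exp (-B⁻¹ * x) = Real.exp (-x) := by
            rw [← Real.exp_add]; congr 1; field_simp; ring
          rw [hI, show x ^ (q-1) * Real.exp (-((B-1)/B*x)) * (B * Real.exp (-B⁻¹*x))
            = B * x^(q-1) * (Real.exp (-((B-1)/B*x)) * Real.exp (-B⁻¹*x)) by ring, h5]
end

section
/- Let π be a probability density on ℝ^p with f = -log π m-strongly convex and minimizer θ*. Then for any 0 < a ≤ 2, ∫ ‖θ - θ*‖₂^a π(θ) dθ ≤ (p/m)^{a/2}. -/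
/-! For the minimiser `x₀`, strong convexity gives
`f (t • x + (1 - t) • x₀) ≤ f x - m / 2 * (1 - t ^ 2) * ‖x - x₀‖ ^ 2`, so the density `e^{-f}`
dilated towards `x₀` by a factor `t ∈ (0, 1)` dominates
`e^{-f x} * (1 + m / 2 * (1 - t ^ 2) * ‖x - x₀‖ ^ 2)`. The dilated density has mass `t^{-d}`, hence
`t ^ d * (1 + m / 2 * (1 - t ^ 2) * M₂) ≤ 1` for the second moment `M₂`; comparing derivatives at
`t = 1` gives `m * M₂ ≤ d`. Lower moments follow by concavity of `y ↦ y ^ (a / 2)`, in the form of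
Bernoulli's inequality. -/

open MeasureTheory Filter Set Module Real Topology

section StrongConvexity

variable {E : Type*} [NormedAddCommGroup E] [NormedSpace ℝ E] {s : Set E} {f : E → ℝ} {m : ℝ}
  {x₀ x : E}

theorem StrongConvexOn.add_sq_norm_sub_le_of_isMinOn (hf : StrongConvexOn s m f)
    (hmin : IsMinOn f s x₀) (hx₀ : x₀ ∈ s) (hx : x ∈ s) :
    f x₀ + m / 2 * ‖x - x₀‖ ^ 2 ≤ f x := by
  have hlt : ∀ t ∈ Ioo (0 : ℝ) 1, f x₀ + (1 - t) * (m / 2 * ‖x - x₀‖ ^ 2) ≤ f x := by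
    rintro t ⟨ht0, ht1⟩
    have hconv := hf.2 hx hx₀ ht0.le (sub_nonneg.2 ht1.le) (add_sub_cancel t 1)
    have hmin_t : f x₀ ≤ f (t • x + (1 - t) • x₀) :=
      hmin (hf.1 hx hx₀ ht0.le (sub_nonneg.2 ht1.le) (add_sub_cancel t 1))
    simp only [smul_eq_mul] at hconv
    have : t * (f x₀ + (1 - t) * (m / 2 * ‖x - x₀‖ ^ 2)) ≤ t * f x := by linarith
    exact le_of_mul_le_mul_left this ht0
  have hlim : Tendsto (fun t : ℝ ↦ f x₀ + (1 - t) * (m / 2 * ‖x - x₀‖ ^ 2)) (𝓝[>] 0)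
      (𝓝 (f x₀ + m / 2 * ‖x - x₀‖ ^ 2)) :=
    tendsto_nhdsWithin_of_tendsto_nhds <| by
      simpa using (Continuous.tendsto (by fun_prop) 0 :
        Tendsto (fun t : ℝ ↦ f x₀ + (1 - t) * (m / 2 * ‖x - x₀‖ ^ 2)) _ _)
  exact le_of_tendsto hlim (eventually_of_mem (Ioo_mem_nhdsGT zero_lt_one) hlt)

theorem StrongConvexOn.apply_smul_add_smul_add_le_of_isMinOn (hf : StrongConvexOn s m f)
    (hmin : IsMinOn f s x₀) (hx₀ : x₀ ∈ s) (hx : x ∈ s) {t : ℝ} (ht0 : 0 ≤ t) (ht1 : t ≤ 1) :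
    f (t • x + (1 - t) • x₀) + m / 2 * (1 - t ^ 2) * ‖x - x₀‖ ^ 2 ≤ f x := by
  have hconv := hf.2 hx hx₀ ht0 (sub_nonneg.2 ht1) (add_sub_cancel t 1)
  have hgrowth := hf.add_sq_norm_sub_le_of_isMinOn hmin hx₀ hx
  simp only [smul_eq_mul] at hconv
  nlinarith [mul_le_mul_of_nonneg_left hgrowth (sub_nonneg.2 ht1)]

theorem StrongConvexOn.exp_neg_mul_one_add_le_of_isMinOn (hf : StrongConvexOn s m f)
    (hmin : IsMinOn f s x₀) (hx₀ : x₀ ∈ s) (hx : x ∈ s) {t : ℝ} (ht0 : 0 ≤ t) (ht1 : t ≤ 1) :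
    exp (-f x) * (1 + m / 2 * (1 - t ^ 2) * ‖x - x₀‖ ^ 2) ≤ exp (-f (t • x + (1 - t) • x₀)) := by
  have hcontract := hf.apply_smul_add_smul_add_le_of_isMinOn hmin hx₀ hx ht0 ht1
  calc exp (-f x) * (1 + m / 2 * (1 - t ^ 2) * ‖x - x₀‖ ^ 2)
      ≤ exp (-f x) * exp (m / 2 * (1 - t ^ 2) * ‖x - x₀‖ ^ 2) := by
        gcongr; linarith [add_one_le_exp (m / 2 * (1 - t ^ 2) * ‖x - x₀‖ ^ 2)]
    _ ≤ exp (-f (t • x + (1 - t) • x₀)) := by rw [← exp_add]; gcongr; linarith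

end StrongConvexity

theorem two_mul_le_natCast_mul_of_forall_pow_mul_le {d : ℕ} {A Z : ℝ}
    (h : ∀ t ∈ Ioo (0 : ℝ) 1, t ^ d * (Z + (1 - t ^ 2) * A) ≤ Z) : 2 * A ≤ d * Z := by
  have hgeom : ∀ t ∈ Ioo (0 : ℝ) 1, t ^ d * ((1 + t) * A) ≤ (∑ i ∈ Finset.range d, t ^ i) * Z := by
    rintro t ⟨ht0, ht1⟩
    have hmul : (1 - t) * (t ^ d * ((1 + t) * A))
        ≤ (1 - t) * ((∑ i ∈ Finset.range d, t ^ i) * Z) := by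
      linear_combination h t ⟨ht0, ht1⟩ + Z * geom_sum_mul t d
    exact le_of_mul_le_mul_left hmul (sub_pos.2 ht1)
  have hcont : ∀ g : ℝ → ℝ, Continuous g → Tendsto g (𝓝[<] 1) (𝓝 (g 1)) :=
    fun g hg ↦ tendsto_nhdsWithin_of_tendsto_nhds (hg.tendsto 1)
  have hl := hcont (fun t ↦ t ^ d * ((1 + t) * A)) (by fun_prop)
  have hr := hcont (fun t ↦ (∑ i ∈ Finset.range d, t ^ i) * Z) (by fun_prop)
  have := le_of_tendsto_of_tendsto hl hr (eventually_of_mem (Ioo_mem_nhdsLT zero_lt_one) hgeom)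
  norm_num at this
  linarith

theorem integral_rpow_mul_le_rpow {α : Type*} [MeasurableSpace α] {μ : Measure α} {g h : α → ℝ}
    (hg0 : ∀ x, 0 ≤ g x) (hg : Integrable g μ) (hg1 : ∫ x, g x ∂μ = 1) (hh0 : ∀ x, 0 ≤ h x)
    (hhg : Integrable (fun x ↦ h x * g x) μ) {r B : ℝ} (hr0 : 0 ≤ r) (hr1 : r ≤ 1) (hB : 0 < B)
    (hhgB : ∫ x, h x * g x ∂μ ≤ B) : ∫ x, h x ^ r * g x ∂μ ≤ B ^ r := by
  have hpt : ∀ x, h x ^ r * g x ≤ B ^ r * ((1 - r) * g x + r / B * (h x * g x)) := by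
    intro x
    have hbern := rpow_one_add_le_one_add_mul_self (s := h x / B - 1)
      (by linarith [div_nonneg (hh0 x) hB.le]) hr0 hr1
    rw [add_sub_cancel, div_rpow (hh0 x) hB.le, div_le_iff₀ (rpow_pos_of_pos hB r)] at hbern
    calc h x ^ r * g x ≤ (1 + r * (h x / B - 1)) * B ^ r * g x := by gcongr; exact hg0 x
      _ = B ^ r * ((1 - r) * g x + r / B * (h x * g x)) := by field_simp; ring
  calc ∫ x, h x ^ r * g x ∂μ ≤ ∫ x, B ^ r * ((1 - r) * g x + r / B * (h x * g x)) ∂μ :=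
        integral_mono_of_nonneg (.of_forall fun x ↦ mul_nonneg (rpow_nonneg (hh0 x) r) (hg0 x))
          (((hg.const_mul _).add (hhg.const_mul _)).const_mul _) (.of_forall hpt)
    _ = B ^ r * ((1 - r) + r / B * ∫ x, h x * g x ∂μ) := by
        rw [integral_const_mul, integral_add (hg.const_mul _) (hhg.const_mul _), integral_const_mul,
          integral_const_mul, hg1, mul_one]
    _ ≤ B ^ r * ((1 - r) + r / B * B) := by gcongr
    _ = B ^ r := by field_simp; ring

section LogConcaveDensity

variable {E : Type*} [NormedAddCommGroup E] [NormedSpace ℝ E] [MeasurableSpace E] [BorelSpace E]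
  [FiniteDimensional ℝ E] {μ : Measure E} [μ.IsAddHaarMeasure] {f : E → ℝ} {m : ℝ} {x₀ : E}

theorem integral_comp_smul_add_of_nonneg {F : Type*} [NormedAddCommGroup F] [NormedSpace ℝ F]
    (g : E → F) {t : ℝ} (ht : 0 ≤ t) (c : E) :
    ∫ x, g (t • x + c) ∂μ = (t ^ finrank ℝ E)⁻¹ • ∫ x, g x ∂μ := by
  rw [Measure.integral_comp_smul_of_nonneg μ (fun x ↦ g (x + c)) t (hR := ht),
    integral_add_right_eq_self]

theorem StrongConvexOn.integrable_sq_norm_sub_mul_exp_neg (hm : 0 < m)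
    (hf : StrongConvexOn univ m f) (hmin : IsMinOn f univ x₀)
    (hint : Integrable (fun x ↦ exp (-f x)) μ) :
    Integrable (fun x ↦ ‖x - x₀‖ ^ 2 * exp (-f x)) μ := by
  set c := m / 2 * (1 - (1 / 2 : ℝ) ^ 2)
  have hc : 0 < c := by norm_num [c, hm]
  have hdil : Integrable (fun x ↦ c⁻¹ * exp (-f ((1 / 2 : ℝ) • x + (1 - 1 / 2 : ℝ) • x₀))) μ :=
    ((hint.comp_add_right _).comp_smul (by norm_num)).const_mul _
  refine hdil.mono' ((continuous_norm.comp (continuous_id.sub continuous_const)).pow 2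
    |>.aestronglyMeasurable.mul hint.1) (.of_forall fun x ↦ ?_)
  rw [norm_of_nonneg (by positivity), le_inv_mul_iff₀ hc]
  linear_combination hf.exp_neg_mul_one_add_le_of_isMinOn hmin (mem_univ _) (mem_univ x)
    (t := 1 / 2) (by norm_num) (by norm_num) + (exp_pos (-f x)).le

theorem StrongConvexOn.mul_integral_sq_norm_sub_mul_exp_neg_le (hm : 0 < m)
    (hf : StrongConvexOn univ m f) (hmin : IsMinOn f univ x₀)
    (hint : Integrable (fun x ↦ exp (-f x)) μ) :
    m * ∫ x, ‖x - x₀‖ ^ 2 * exp (-f x) ∂μ ≤ finrank ℝ E * ∫ x, exp (-f x) ∂μ := by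
  have hmoment := hf.integrable_sq_norm_sub_mul_exp_neg hm hmin hint
  set M := ∫ x, ‖x - x₀‖ ^ 2 * exp (-f x) ∂μ
  set Z := ∫ x, exp (-f x) ∂μ
  suffices ∀ t ∈ Ioo (0 : ℝ) 1, t ^ finrank ℝ E * (Z + (1 - t ^ 2) * (m / 2 * M)) ≤ Z by
    linarith [two_mul_le_natCast_mul_of_forall_pow_mul_le this]
  rintro t ⟨ht0, ht1⟩
  have ht2 : 0 ≤ 1 - t ^ 2 := by nlinarith
  have hdil : Z + m / 2 * (1 - t ^ 2) * M ≤ (t ^ finrank ℝ E)⁻¹ * Z := calc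
    Z + m / 2 * (1 - t ^ 2) * M
        = ∫ x, exp (-f x) * (1 + m / 2 * (1 - t ^ 2) * ‖x - x₀‖ ^ 2) ∂μ := by
      rw [← integral_const_mul, ← integral_add hint (hmoment.const_mul _)]
      congr with x
      ring
    _ ≤ ∫ x, exp (-f (t • x + (1 - t) • x₀)) ∂μ :=
      integral_mono_of_nonneg (.of_forall fun x ↦ by positivity)
        ((hint.comp_add_right _).comp_smul ht0.ne')
        (.of_forall fun x ↦
          hf.exp_neg_mul_one_add_le_of_isMinOn hmin (mem_univ _) (mem_univ x) ht0.le ht1.le)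
    _ = (t ^ finrank ℝ E)⁻¹ * Z := integral_comp_smul_add_of_nonneg (fun x ↦ exp (-f x)) ht0.le _
  have htd : 0 < t ^ finrank ℝ E := pow_pos ht0 _
  rw [← div_eq_inv_mul, le_div_iff₀ htd] at hdil
  linarith

end LogConcaveDensity

/-- Let pd be a probability density on ℝ^p with f = -log pd
m-strongly convex and minimizer θ*. Then for any 0 < a ≤ 2,
∫ ‖θ - θ*‖^a pd(θ) dθ ≤ (p/m)^{a/2}. -/
theorem stmt7 {p : ℕ} (hp : 0 < p) (f : EuclideanSpace ℝ (Fin p) → ℝ)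
    (pd : EuclideanSpace ℝ (Fin p) → ℝ)
    (θstar : EuclideanSpace ℝ (Fin p)) (m a : ℝ) (hm : 0 < m)
    (ha : 0 < a) (ha2 : a ≤ 2)
    (hconv : StrongConvexOn Set.univ m f)
    (hmin : IsMinOn f Set.univ θstar)
    (hpd : ∀ θ, pd θ = Real.exp (-f θ))
    (hprob : ∫ θ, pd θ = 1) :
    ∫ θ, ‖θ - θstar‖ ^ a * pd θ ≤ ((p : ℝ) / m) ^ (a / 2) := by
  obtain rfl : pd = fun θ ↦ exp (-f θ) := funext hpd
  have hint : Integrable (fun θ ↦ exp (-f θ)) := Integrable.of_integral_ne_zero (by simp [hprob])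
  have hsecond : ∫ θ, ‖θ - θstar‖ ^ 2 * exp (-f θ) ≤ p / m := by
    have := hconv.mul_integral_sq_norm_sub_mul_exp_neg_le (μ := volume) hm hmin hint
    rw [hprob, finrank_euclideanSpace_fin, mul_one] at this
    rwa [le_div_iff₀ hm, mul_comm]
  have hnorm_rpow (θ) : ‖θ - θstar‖ ^ a = (‖θ - θstar‖ ^ 2) ^ (a / 2) := by
    rw [← rpow_natCast, ← rpow_mul (norm_nonneg _)]
    ring_nf
  simp only [hnorm_rpow]
  exact integral_rpow_mul_le_rpow (fun _ ↦ (exp_pos _).le) hint hprob (fun _ ↦ sq_nonneg _)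
    (hconv.integrable_sq_norm_sub_mul_exp_neg hm hmin hint) (by positivity) (by linarith)
    (by positivity) hsecond
end

section
/- Let π be a probability density on ℝ^p with f = -log π m-strongly convex and minimizer θ*. Then for any a > 2, ∫ ‖θ-θ*‖₂^a π(θ) dθ ≤ (p/m)^{a/2} · 2^{a-1} (1 + (1 + a/p)^{a/2 - 1}). -/
/-!
Instead of comparing with a Gaussian (Hargé's inequality), the moment is bounded directly.
Strong convexity at the minimiser `x₀` gives, for `0 ≤ s ≤ 1`,
`f (x₀ + s • u) ≤ f (x₀ + u) - m (1 - s²) ‖u‖² / 2`, so `‖u‖ ^ a e^{-f (x₀ + u)}` is at most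
`sup_r r ^ a e^{-m (1 - s²) r² / 2}` times `e^{-f (x₀ + s • u)}`, and the substitution `u ↦ s • u`
costs a factor `s ^ (-d)`. Taking `s² = d / (d + a)` gives `E ‖X - x₀‖ ^ a ≤ ((d + a) / m) ^ (a / 2)`,
which is below the stated bound because `1 + a / p ≤ 1 + a`.
-/

open MeasureTheory Module Real Set Filter Topology

lemma Real.rpow_le_mul_exp {y β k : ℝ} (hy : 0 ≤ y) (hβ : 0 < β) (hk : 0 < k) :
    y ^ k ≤ (k / (exp 1 * β)) ^ k * exp (β * y) := by
  set c := k / (exp 1 * β)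
  have hc : 0 < c := by positivity
  have hratio : y / c ≤ exp (β * y / k) := by
    calc y / c = exp 1 * (β * y / k) := by simp only [c]; field_simp
      _ ≤ exp (β * y / k) := exp_one_mul_le_exp
  calc y ^ k = c ^ k * (y / c) ^ k := by
        rw [div_rpow hy hc.le]; field_simp
    _ ≤ c ^ k * exp (β * y / k) ^ k := by gcongr
    _ = c ^ k * exp (β * y) := by rw [← exp_mul, div_mul_cancel₀ _ hk.ne']

lemma rpow_half_le_two_rpow_mul_one_add {q a : ℝ} (hq : 1 ≤ q) (ha : 2 < a) (hqa : q ≤ 1 + a) :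
    q ^ (a / 2) ≤ 2 ^ (a - 1) * (1 + q ^ (a / 2 - 1)) := by
  have hq0 : 0 < q := by linarith
  have hone : 1 ≤ q ^ (a / 2 - 1) := one_le_rpow hq (by linarith)
  rcases le_or_gt q 4 with hq4 | hq4
  · calc q ^ (a / 2) ≤ 4 ^ (a / 2) := by gcongr
      _ = 2 ^ (a - 1) * 2 := by
          rw [show (4 : ℝ) = 2 ^ (2 : ℝ) by norm_num, ← rpow_mul (by norm_num),
            ← rpow_add_one (by norm_num)]
          ring_nf
      _ ≤ 2 ^ (a - 1) * (1 + q ^ (a / 2 - 1)) := by gcongr; linarith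
  · -- Bernoulli: `2 ^ (a - 2) ≥ a - 1`, so `2 ^ (a - 1) ≥ 2 * a - 2 ≥ 1 + a ≥ q` once `a ≥ 3`.
    have hbernoulli := one_add_mul_self_le_rpow_one_add (s := 1) (by norm_num)
      (show 1 ≤ a - 2 by linarith)
    have htwo : (2 : ℝ) ^ (a - 1) = 2 * 2 ^ (a - 2) := by
      rw [show a - 1 = a - 2 + 1 by ring, rpow_add_one (by norm_num), mul_comm]
    norm_num at hbernoulli
    calc q ^ (a / 2) = q * q ^ (a / 2 - 1) := by
          rw [← rpow_one_add' hq0.le (by linarith)]; ring_nf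
      _ ≤ 2 ^ (a - 1) * q ^ (a / 2 - 1) := by gcongr; linarith
      _ ≤ 2 ^ (a - 1) * (1 + q ^ (a / 2 - 1)) := by gcongr; linarith

namespace StrongConvexOn

variable {E : Type*} [NormedAddCommGroup E] [NormedSpace ℝ E] {f : E → ℝ} {m a : ℝ} {x₀ : E}

lemma add_sq_norm_sub_le_of_isMinOn_s8 (hf : StrongConvexOn univ m f)
    (hmin : IsMinOn f univ x₀) (x : E) : f x₀ + m / 2 * ‖x - x₀‖ ^ 2 ≤ f x := by
  set c := m / 2 * ‖x - x₀‖ ^ 2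
  -- Strong convexity on the segment `[x₀, x]` at weight `t` gives the bound up to a factor `1 - t`.
  have hweighted : ∀ t ∈ Ioo (0 : ℝ) 1, f x₀ + (1 - t) * c ≤ f x := by
    rintro t ⟨ht0, ht1⟩
    have hconv := hf.2 (mem_univ x) (mem_univ x₀) ht0.le (sub_nonneg.2 ht1.le) (by ring)
    have hle : f x₀ ≤ f (t • x + (1 - t) • x₀) := hmin (mem_univ _)
    simp only [smul_eq_mul] at hconv
    have h : 0 ≤ t * (f x - (f x₀ + (1 - t) * c)) := by linear_combination hconv + hle
    exact sub_nonneg.1 (nonneg_of_mul_nonneg_right h ht0)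
  have hlim : Tendsto (fun t : ℝ ↦ f x₀ + (1 - t) * c) (𝓝[>] 0) (𝓝 (f x₀ + (1 - 0) * c)) :=
    ((continuous_const.add ((continuous_const.sub continuous_id).mul continuous_const)).tendsto
      0).mono_left nhdsWithin_le_nhds
  simpa using le_of_tendsto hlim (eventually_of_mem (Ioo_mem_nhdsGT one_pos) hweighted)

lemma apply_add_smul_le_of_isMinOn (hf : StrongConvexOn univ m f)
    (hmin : IsMinOn f univ x₀) {s : ℝ} (hs0 : 0 ≤ s) (hs1 : s ≤ 1) (u : E) :
    f (x₀ + s • u) ≤ f (x₀ + u) - m / 2 * (1 - s ^ 2) * ‖u‖ ^ 2 := by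
  have hconv := hf.2 (mem_univ (x₀ + u)) (mem_univ x₀) hs0 (sub_nonneg.2 hs1) (by ring)
  have hcomb : s • (x₀ + u) + (1 - s) • x₀ = x₀ + s • u := by
    rw [smul_add, sub_smul, one_smul]; abel
  have hmin' := hf.add_sq_norm_sub_le_of_isMinOn_s8 hmin (x₀ + u)
  simp only [hcomb, add_sub_cancel_left, smul_eq_mul] at hconv hmin'
  nlinarith

lemma rpow_norm_mul_exp_neg_le (hf : StrongConvexOn univ m f)
    (hmin : IsMinOn f univ x₀) (hm : 0 < m) (ha : 0 < a) {s : ℝ} (hs0 : 0 ≤ s) (hs1 : s < 1)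
    (u : E) :
    ‖u‖ ^ a * exp (-f (x₀ + u))
      ≤ (a / (exp 1 * (m * (1 - s ^ 2)))) ^ (a / 2) * exp (-f (x₀ + s • u)) := by
  have hs2 : 0 < 1 - s ^ 2 := by nlinarith
  set β := m / 2 * (1 - s ^ 2) with hβ_def
  have hmoment :
      ‖u‖ ^ a ≤ (a / (exp 1 * (m * (1 - s ^ 2)))) ^ (a / 2) * exp (β * ‖u‖ ^ 2) := by
    have h := rpow_le_mul_exp (sq_nonneg ‖u‖) (by positivity : 0 < β) (half_pos ha)
    rwa [← rpow_natCast_mul (norm_nonneg u), Nat.cast_ofNat, mul_div_cancel₀ _ two_ne_zero,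
      show a / 2 / (exp 1 * β) = a / (exp 1 * (m * (1 - s ^ 2))) by rw [hβ_def]; field_simp] at h
  have hgain : β * ‖u‖ ^ 2 - f (x₀ + u) ≤ -f (x₀ + s • u) := by
    rw [hβ_def]
    linarith [hf.apply_add_smul_le_of_isMinOn hmin hs0 hs1.le u]
  calc ‖u‖ ^ a * exp (-f (x₀ + u))
      ≤ (a / (exp 1 * (m * (1 - s ^ 2)))) ^ (a / 2) * exp (β * ‖u‖ ^ 2) * exp (-f (x₀ + u)) := by
        gcongr
    _ ≤ (a / (exp 1 * (m * (1 - s ^ 2)))) ^ (a / 2) * exp (-f (x₀ + s • u)) := by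
        rw [mul_assoc, ← exp_add]; gcongr; linarith

variable [FiniteDimensional ℝ E] [MeasurableSpace E] [BorelSpace E] (μ : Measure E)
  [μ.IsAddHaarMeasure]

lemma integral_rpow_norm_sub_mul_exp_neg_le_of_lt_one
    (hf : StrongConvexOn univ m f) (hmin : IsMinOn f univ x₀) (hm : 0 < m) (ha : 0 < a)
    (hint : Integrable (fun x ↦ exp (-f x)) μ) {s : ℝ} (hs0 : 0 < s) (hs1 : s < 1) :
    ∫ x, ‖x - x₀‖ ^ a * exp (-f x) ∂μ
      ≤ (a / (exp 1 * (m * (1 - s ^ 2)))) ^ (a / 2) * (s ^ finrank ℝ E)⁻¹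
        * ∫ x, exp (-f x) ∂μ := by
  set K := (a / (exp 1 * (m * (1 - s ^ 2)))) ^ (a / 2)
  calc ∫ x, ‖x - x₀‖ ^ a * exp (-f x) ∂μ = ∫ u, ‖u‖ ^ a * exp (-f (x₀ + u)) ∂μ := by
        rw [← integral_add_left_eq_self _ x₀]; simp only [add_sub_cancel_left]
    _ ≤ ∫ u, K * exp (-f (x₀ + s • u)) ∂μ :=
        integral_mono_of_nonneg (ae_of_all _ fun u ↦ by positivity)
          (((hint.comp_add_left x₀).comp_smul hs0.ne').const_mul K)
          (ae_of_all _ (hf.rpow_norm_mul_exp_neg_le hmin hm ha hs0.le hs1))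
    _ = K * (s ^ finrank ℝ E)⁻¹ * ∫ x, exp (-f x) ∂μ := by
        rw [integral_const_mul, Measure.integral_comp_smul μ (fun v ↦ exp (-f (x₀ + v))),
          integral_add_left_eq_self (fun x ↦ exp (-f x)), abs_of_pos (by positivity), smul_eq_mul,
          mul_assoc]

lemma integral_rpow_norm_sub_mul_exp_neg_le
    (hf : StrongConvexOn univ m f) (hmin : IsMinOn f univ x₀) (hm : 0 < m) (ha : 0 < a)
    (hE : 0 < finrank ℝ E) (hint : Integrable (fun x ↦ exp (-f x)) μ) :
    ∫ x, ‖x - x₀‖ ^ a * exp (-f x) ∂μ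
      ≤ ((finrank ℝ E + a) / m) ^ (a / 2) * ∫ x, exp (-f x) ∂μ := by
  set d := finrank ℝ E
  have hd : (0 : ℝ) < d := Nat.cast_pos.2 hE
  have hda : (d : ℝ) + a ≠ 0 := by positivity
  -- This `s` minimises `(1 - s ^ 2) ^ (-a / 2) * s ^ (-d)`.
  set s := √(d / (d + a))
  have hs1 : s < 1 := by
    rw [sqrt_lt' one_pos, one_pow, div_lt_one (by positivity)]; linarith
  have hsq : s ^ 2 = d / (d + a) := sq_sqrt (by positivity)
  have hconst : a / (exp 1 * (m * (1 - s ^ 2))) = (d + a) / m / exp 1 := by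
    rw [hsq, one_sub_div hda, add_sub_cancel_left]
    field_simp
  have hvolume : (s ^ d)⁻¹ ≤ exp 1 ^ (a / 2) := by
    calc (s ^ d)⁻¹ = (1 + a / d) ^ ((d : ℝ) / 2) := by
          rw [show s = (d / (d + a)) ^ (1 / 2 : ℝ) from sqrt_eq_rpow _,
            ← rpow_mul_natCast (by positivity), ← inv_rpow (by positivity), inv_div,
            add_div, div_self hd.ne']
          ring_nf
      _ ≤ exp (a / d) ^ ((d : ℝ) / 2) := by
          gcongr; linarith [add_one_le_exp (a / d)]
      _ = exp 1 ^ (a / 2) := by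
          rw [← exp_mul, exp_one_rpow]; field_simp
  have hfactor :
      (a / (exp 1 * (m * (1 - s ^ 2)))) ^ (a / 2) * (s ^ d)⁻¹ ≤ ((d + a) / m) ^ (a / 2) :=
    calc _ ≤ ((d + a) / m / exp 1) ^ (a / 2) * exp 1 ^ (a / 2) := by
          rw [hconst]; gcongr
      _ = ((d + a) / m) ^ (a / 2) := by
          rw [div_rpow (by positivity) (exp_pos 1).le, div_mul_cancel₀ _ (by positivity)]
  calc _ ≤ _ := hf.integral_rpow_norm_sub_mul_exp_neg_le_of_lt_one μ hmin hm ha hint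
        (by positivity) hs1
    _ ≤ _ := mul_le_mul_of_nonneg_right hfactor (integral_nonneg fun x ↦ (exp_pos (-f x)).le)

end StrongConvexOn

/-- Let pd be a probability density on ℝ^p with f = -log pd
m-strongly convex and minimizer θ*. Then for any a > 2,
∫ ‖θ-θ*‖^a pd(θ) dθ ≤ (p/m)^{a/2} · 2^{a-1}(1 + (1 + a/p)^{a/2-1}). -/
theorem stmt8 {p : ℕ} (hp : 0 < p) (f : EuclideanSpace ℝ (Fin p) → ℝ)
    (pd : EuclideanSpace ℝ (Fin p) → ℝ)
    (θstar : EuclideanSpace ℝ (Fin p)) (m a : ℝ) (hm : 0 < m)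
    (ha : 2 < a)
    (hconv : StrongConvexOn Set.univ m f)
    (hmin : IsMinOn f Set.univ θstar)
    (hpd : ∀ θ, pd θ = Real.exp (-f θ))
    (hprob : ∫ θ, pd θ = 1) :
    ∫ θ, ‖θ - θstar‖ ^ a * pd θ
      ≤ ((p : ℝ) / m) ^ (a / 2)
        * (2 ^ (a - 1) * (1 + (1 + a / (p : ℝ)) ^ (a / 2 - 1))) := by
  obtain rfl : pd = fun θ ↦ exp (-f θ) := funext hpd
  have hp' : (0 : ℝ) < p := Nat.cast_pos.2 hp
  have hint : Integrable (fun θ ↦ exp (-f θ)) := .of_integral_ne_zero (by rw [hprob]; norm_num)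
  have hmoment := hconv.integral_rpow_norm_sub_mul_exp_neg_le volume hmin hm (a := a)
    (by linarith) (by rwa [finrank_euclideanSpace_fin]) hint
  rw [finrank_euclideanSpace_fin, hprob, mul_one] at hmoment
  calc _ ≤ ((p + a) / m) ^ (a / 2) := hmoment
    _ = (p / m) ^ (a / 2) * (1 + a / p) ^ (a / 2) := by
        rw [← mul_rpow (by positivity) (by positivity)]; congr 1; field_simp
    _ ≤ _ := by
        gcongr
        refine rpow_half_le_two_rpow_mul_one_add (by simp; positivity) ha ?_
        gcongr
        exact div_le_self (by linarith) (Nat.one_le_cast.2 hp)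
end

section
/- For every y ≥ 1 and every x > 0, the Gamma function satisfies x^{-y} Γ(x + y) / Γ(x) ≤ (1 + y/x)^{y-1}. -/
/-!
Since `log ∘ Γ` is convex on `(0, ∞)` and `x + y` is the convex combination
`(1/y)(x + 1) + (1 - 1/y)(x + y + 1)`, the functional equation `Γ(t + 1) = t Γ(t)` at `t = x`
and `t = x + y` turns convexity into `log Γ(x + y) ≤ log x + log Γ(x) + (y - 1) log(x + y)`,
which is the logarithm of the claimed inequality.
-/

open Real Set

namespace Real

theorem log_Gamma_add_one {x : ℝ} (hx : 0 < x) :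
    log (Gamma (x + 1)) = log x + log (Gamma x) := by
  rw [Gamma_add_one hx.ne', log_mul hx.ne' (Gamma_pos_of_pos hx).ne']

theorem log_Gamma_add_le {x y : ℝ} (hx : 0 < x) (hy : 1 ≤ y) :
    log (Gamma (x + y)) ≤ log x + log (Gamma x) + (y - 1) * log (x + y) := by
  have hy0 : 0 < y := one_pos.trans_le hy
  have hxy : 0 < x + y := by linarith
  have hcomb : (1 / y) • (x + 1) + (1 - 1 / y) • (x + y + 1) = x + y := by
    simp only [smul_eq_mul]
    field_simp
    ring
  have hconv := convexOn_log_Gamma.2 (mem_Ioi.2 (by linarith : (0 : ℝ) < x + 1))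
    (mem_Ioi.2 (by linarith : (0 : ℝ) < x + y + 1)) (by positivity : (0 : ℝ) ≤ 1 / y)
    (sub_nonneg.2 ((div_le_one hy0).2 hy)) (add_sub_cancel _ _)
  rw [hcomb] at hconv
  simp only [Function.comp_apply, smul_eq_mul, log_Gamma_add_one hx,
    log_Gamma_add_one hxy] at hconv
  have hscaled := mul_le_mul_of_nonneg_left hconv hy0.le
  field_simp at hscaled
  linarith

end Real

/-- For every y ≥ 1 and every x > 0, the Gamma function satisfies
x^{-y} Γ(x + y) / Γ(x) ≤ (1 + y/x)^{y-1}. -/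
theorem stmt9 (x y : ℝ) (hx : 0 < x) (hy : 1 ≤ y) :
    x ^ (-y) * Real.Gamma (x + y) / Real.Gamma x ≤ (1 + y / x) ^ (y - 1) := by
  have hxy : 0 < x + y := by linarith
  have hGx := Gamma_pos_of_pos hx
  have hGxy := Gamma_pos_of_pos hxy
  have hratio : 1 + y / x = (x + y) / x := by field_simp
  rw [hratio, ← log_le_log_iff (by positivity) (by positivity), log_div (by positivity) hGx.ne',
    log_mul (by positivity) hGxy.ne', log_rpow hx, log_rpow (by positivity),
    log_div hxy.ne' hx.ne']
  linarith [log_Gamma_add_le hx hy]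
end

section
/- Let π(θ) ∝ exp(-f(θ)) on ℝ^p where f(θ) = ‖θ‖₂²/2 for ‖θ‖₂ ≤ 1 and f(θ) = ‖θ‖₂ for ‖θ‖₂ > 1. Then for any a > 0 and any p ≥ max(2, a-1), ∫ ‖θ‖₂^a π(θ) dθ ≥ 0.1 · Γ(p+a)/Γ(p). -/
open MeasureTheory Set

noncomputable def phi12 (r : ℝ) : ℝ := if r ≤ 1 then r ^ 2 / 2 else r

lemma phi12_meas : Measurable phi12 :=
  Measurable.ite (measurableSet_le measurable_id measurable_const)
    ((measurable_id.pow_const 2).div_const 2) measurable_id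

lemma phi12_le {r : ℝ} (hr : 0 ≤ r) : phi12 r ≤ r := by
  unfold phi12; split_ifs with h
  · nlinarith
  · exact le_rfl

lemma le_phi12 (r : ℝ) : r - 1 ≤ phi12 r := by
  unfold phi12; split_ifs with h
  · nlinarith
  · linarith

lemma exp_sub_exp12 {u v : ℝ} (hu : 0 ≤ u) (huv : u ≤ v) :
    Real.exp (-u) ≤ Real.exp (-v) + (v - u) := by
  have hA : Real.exp (-u) ≤ 1 := Real.exp_le_one_iff.mpr (by linarith)
  have hB : (u - v) + 1 ≤ Real.exp (u - v) := Real.add_one_le_exp _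
  have hC : Real.exp (-u) * Real.exp (u - v) = Real.exp (-v) := by
    rw [← Real.exp_add]; ring_nf
  have hpos : 0 < Real.exp (-u) := Real.exp_pos _
  nlinarith [mul_le_mul_of_nonneg_left hB hpos.le]

lemma integrable12 {s : ℝ} (hs : 0 < s) :
    IntegrableOn (fun r : ℝ => Real.exp (-phi12 r) * r ^ (s - 1)) (Ioi (0:ℝ)) := by
  have hg : IntegrableOn (fun r : ℝ => Real.exp 1 * (Real.exp (-r) * r ^ (s - 1)))
      (Ioi (0:ℝ)) := (Real.GammaIntegral_convergent hs).const_mul _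
  refine Integrable.mono' hg ?_ ?_
  · have hm : Measurable fun r : ℝ => Real.exp (-phi12 r) * r ^ (s - 1) := by
      have h1 : Measurable fun r : ℝ => r ^ (s - 1) := by measurability
      exact (phi12_meas.neg.exp).mul h1
    exact hm.aestronglyMeasurable
  · filter_upwards [ae_restrict_mem measurableSet_Ioi] with r hr
    have hr0 : (0:ℝ) < r := hr
    have h1 : (0:ℝ) ≤ Real.exp (-phi12 r) * r ^ (s - 1) := by positivity
    rw [Real.norm_eq_abs, abs_of_nonneg h1]
    have h2 : Real.exp (-phi12 r) ≤ Real.exp 1 * Real.exp (-r) := by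
      rw [← Real.exp_add]
      exact Real.exp_le_exp.mpr (by linarith [le_phi12 r])
    calc Real.exp (-phi12 r) * r ^ (s - 1)
        ≤ (Real.exp 1 * Real.exp (-r)) * r ^ (s - 1) :=
          mul_le_mul_of_nonneg_right h2 (Real.rpow_nonneg hr0.le _)
      _ = Real.exp 1 * (Real.exp (-r) * r ^ (s - 1)) := by ring

lemma Gamma_le_int12 {s : ℝ} (hs : 0 < s) :
    Real.Gamma s ≤ ∫ r in Ioi (0:ℝ), Real.exp (-phi12 r) * r ^ (s - 1) := by
  rw [Real.Gamma_eq_integral hs]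
  refine setIntegral_mono_on (Real.GammaIntegral_convergent hs) (integrable12 hs)
    measurableSet_Ioi fun r hr => ?_
  have hr0 : (0:ℝ) < r := hr
  exact mul_le_mul_of_nonneg_right
    (Real.exp_le_exp.mpr (neg_le_neg (phi12_le hr0.le))) (Real.rpow_nonneg hr0.le _)

lemma int_le_Gamma12 {s : ℝ} (hs : 0 < s) :
    ∫ r in Ioi (0:ℝ), Real.exp (-phi12 r) * r ^ (s - 1)
      ≤ Real.Gamma s + 1 / (s + 1) := by
  have hsplit : Ioi (0:ℝ) = Ioc 0 1 ∪ Ioi 1 := (Ioc_union_Ioi_eq_Ioi zero_le_one).symm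
  have hdisj : Disjoint (Ioc (0:ℝ) 1) (Ioi 1) := Ioc_disjoint_Ioi le_rfl
  have hf1 : IntegrableOn (fun r : ℝ => Real.exp (-phi12 r) * r ^ (s - 1)) (Ioc 0 1) :=
    (integrable12 hs).mono_set Ioc_subset_Ioi_self
  have hf2 : IntegrableOn (fun r : ℝ => Real.exp (-phi12 r) * r ^ (s - 1)) (Ioi 1) :=
    (integrable12 hs).mono_set (Ioi_subset_Ioi zero_le_one)
  have hg1 : IntegrableOn (fun r : ℝ => Real.exp (-r) * r ^ (s - 1)) (Ioc 0 1) :=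
    (Real.GammaIntegral_convergent hs).mono_set Ioc_subset_Ioi_self
  have hg2 : IntegrableOn (fun r : ℝ => Real.exp (-r) * r ^ (s - 1)) (Ioi 1) :=
    (Real.GammaIntegral_convergent hs).mono_set (Ioi_subset_Ioi zero_le_one)
  have hrs : IntegrableOn (fun r : ℝ => r ^ s) (Ioc (0:ℝ) 1) :=
    (intervalIntegral.intervalIntegrable_rpow' (by linarith)).1
  -- value of ∫_{Ioc 0 1} r ^ s
  have hval : ∫ r in Ioc (0:ℝ) 1, r ^ s = 1 / (s + 1) := by
    rw [← intervalIntegral.integral_of_le zero_le_one,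
      integral_rpow (Or.inl (by linarith))]
    rw [Real.one_rpow, Real.zero_rpow (by linarith)]
    ring
  have key1 : ∫ r in Ioc (0:ℝ) 1, Real.exp (-phi12 r) * r ^ (s - 1)
      ≤ (∫ r in Ioc (0:ℝ) 1, Real.exp (-r) * r ^ (s - 1)) + 1 / (s + 1) := by
    rw [← hval, ← integral_add hg1 hrs]
    refine setIntegral_mono_on hf1 (hg1.add hrs) measurableSet_Ioc fun r hr => ?_
    have hr0 : (0:ℝ) < r := hr.1
    have hb : Real.exp (-phi12 r) ≤ Real.exp (-r) + r := by
      have hφ : phi12 r = r ^ 2 / 2 := if_pos hr.2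
      have h2 : Real.exp (-(r ^ 2 / 2)) ≤ Real.exp (-r) + (r - r ^ 2 / 2) :=
        exp_sub_exp12 (by positivity) (by nlinarith [hr.2])
      rw [hφ]
      nlinarith [h2]
    calc Real.exp (-phi12 r) * r ^ (s - 1)
        ≤ (Real.exp (-r) + r) * r ^ (s - 1) :=
          mul_le_mul_of_nonneg_right hb (Real.rpow_nonneg hr0.le _)
      _ = Real.exp (-r) * r ^ (s - 1) + r ^ (s - 1) * r := by ring
      _ = Real.exp (-r) * r ^ (s - 1) + r ^ s := by
          rw [← Real.rpow_add_one hr0.ne' (s - 1)]; ring_nf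
  have key2 : ∫ r in Ioi (1:ℝ), Real.exp (-phi12 r) * r ^ (s - 1)
      = ∫ r in Ioi (1:ℝ), Real.exp (-r) * r ^ (s - 1) := by
    refine setIntegral_congr_fun measurableSet_Ioi fun r hr => ?_
    have : phi12 r = r := if_neg (not_le.mpr hr)
    rw [this]
  have hsplitL : ∫ r in Ioi (0:ℝ), Real.exp (-phi12 r) * r ^ (s - 1)
      = (∫ r in Ioc (0:ℝ) 1, Real.exp (-phi12 r) * r ^ (s - 1))
        + ∫ r in Ioi (1:ℝ), Real.exp (-phi12 r) * r ^ (s - 1) := by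
    rw [hsplit, setIntegral_union hdisj measurableSet_Ioi hf1 hf2]
  have hsplitG : Real.Gamma s
      = (∫ r in Ioc (0:ℝ) 1, Real.exp (-r) * r ^ (s - 1))
        + ∫ r in Ioi (1:ℝ), Real.exp (-r) * r ^ (s - 1) := by
    rw [Real.Gamma_eq_integral hs, hsplit,
      setIntegral_union hdisj measurableSet_Ioi hg1 hg2]
  rw [hsplitL, hsplitG, key2]
  linarith [key1]

/-- Let pd(θ) ∝ exp(-f(θ)) on ℝ^p where f(θ) = ‖θ‖²/2 for
‖θ‖ ≤ 1 and f(θ) = ‖θ‖ for ‖θ‖ > 1. Then for any a > 0 and any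
p ≥ max(2, a-1), ∫ ‖θ‖^a pd(θ) dθ ≥ 0.1 · Γ(p+a)/Γ(p). -/
theorem stmt12 {p : ℕ} (a : ℝ) (ha : 0 < a)
    (hp2 : 2 ≤ (p : ℝ)) (hpa : a - 1 ≤ (p : ℝ))
    (f pd : EuclideanSpace ℝ (Fin p) → ℝ)
    (hf : ∀ θ, f θ = if ‖θ‖ ≤ 1 then ‖θ‖ ^ 2 / 2 else ‖θ‖)
    (hpd : ∀ θ, pd θ = Real.exp (-f θ) / ∫ θ', Real.exp (-f θ')) :
    0.1 * Real.Gamma ((p : ℝ) + a) / Real.Gamma (p : ℝ)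
      ≤ ∫ θ, ‖θ‖ ^ a * pd θ := by
  have hp2' : 2 ≤ p := by exact_mod_cast hp2
  have hp1 : 1 ≤ p := by omega
  have hppos : (0:ℝ) < p := by linarith
  haveI : Nonempty (Fin p) := ⟨⟨0, by omega⟩⟩
  haveI : Nontrivial (EuclideanSpace ℝ (Fin p)) := inferInstance
  have hdim : Module.finrank ℝ (EuclideanSpace ℝ (Fin p)) = p := finrank_euclideanSpace_fin
  have hf' : ∀ θ : EuclideanSpace ℝ (Fin p), f θ = phi12 ‖θ‖ := by
    intro θ; rw [hf θ]; unfold phi12; rfl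
  set Z := ∫ θ', Real.exp (-f θ') with hZdef
  set c : ℝ := (p : ℝ) * (volume (Metric.ball (0 : EuclideanSpace ℝ (Fin p)) 1)).toReal
    with hcdef
  have hc : 0 < c := mul_pos hppos
    (ENNReal.toReal_pos (Metric.measure_ball_pos volume 0 one_pos).ne' measure_ball_lt_top.ne)
  set D := ∫ r in Ioi (0:ℝ), Real.exp (-phi12 r) * r ^ ((p:ℝ) - 1) with hDdef
  set N := ∫ r in Ioi (0:ℝ), Real.exp (-phi12 r) * r ^ ((p:ℝ) + a - 1) with hNdef
  -- polar coordinates for the normalizing constant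
  have hZ : Z = c * D := by
    rw [hZdef]
    simp_rw [hf']
    rw [integral_fun_norm_addHaar (volume : Measure (EuclideanSpace ℝ (Fin p)))
      (fun r => Real.exp (-phi12 r)), hdim, nsmul_eq_mul, smul_eq_mul, ← mul_assoc]
    rw [hcdef, hDdef]
    congr 1
    refine setIntegral_congr_fun measurableSet_Ioi fun r hr => ?_
    have hr0 : (0:ℝ) < r := hr
    rw [smul_eq_mul, mul_comm, ← Real.rpow_natCast r (p - 1), Nat.cast_sub hp1, Nat.cast_one]
  -- polar coordinates for the numerator
  have hNum : (∫ θ : EuclideanSpace ℝ (Fin p), ‖θ‖ ^ a * Real.exp (-f θ)) = c * N := by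
    simp_rw [hf']
    rw [integral_fun_norm_addHaar (volume : Measure (EuclideanSpace ℝ (Fin p)))
      (fun r => r ^ a * Real.exp (-phi12 r)), hdim, nsmul_eq_mul, smul_eq_mul, ← mul_assoc]
    rw [hcdef, hNdef]
    congr 1
    refine setIntegral_congr_fun measurableSet_Ioi fun r hr => ?_
    have hr0 : (0:ℝ) < r := hr
    rw [smul_eq_mul, ← Real.rpow_natCast r (p - 1), Nat.cast_sub hp1, Nat.cast_one,
      show ((p:ℝ) + a - 1) = ((p:ℝ) - 1) + a by ring, Real.rpow_add hr0]
    ring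
  -- Gamma bounds
  have hN : Real.Gamma ((p:ℝ) + a) ≤ N := Gamma_le_int12 (by linarith)
  have hDl : Real.Gamma (p:ℝ) ≤ D := Gamma_le_int12 hppos
  have hDu : D ≤ Real.Gamma (p:ℝ) + 1 / ((p:ℝ) + 1) := int_le_Gamma12 hppos
  have hGp1 : 1 ≤ Real.Gamma (p:ℝ) := by
    obtain ⟨k, rfl⟩ : ∃ k, p = k + 1 := ⟨p - 1, by omega⟩
    push_cast
    rw [Real.Gamma_nat_eq_factorial k]
    exact_mod_cast Nat.one_le_iff_ne_zero.mpr k.factorial_pos.ne'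
  have hGpa : 0 < Real.Gamma ((p:ℝ) + a) := Real.Gamma_pos_of_pos (by linarith)
  have hD0 : 0 < D := lt_of_lt_of_le (by linarith) hDl
  -- the target integral equals N / D
  have hmain : (∫ θ : EuclideanSpace ℝ (Fin p), ‖θ‖ ^ a * pd θ) = N / D := by
    have hθ : ∀ θ : EuclideanSpace ℝ (Fin p),
        ‖θ‖ ^ a * pd θ = (‖θ‖ ^ a * Real.exp (-f θ)) / Z := fun θ => by
      rw [hpd θ]; ring
    simp_rw [hθ]
    rw [integral_div, hNum, hZ, mul_div_mul_left _ _ hc.ne']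
  rw [hmain, div_le_div_iff₀ (by linarith) hD0]
  have h3 : 1 / ((p:ℝ) + 1) ≤ 1 / 3 := by
    apply one_div_le_one_div_of_le <;> linarith
  nlinarith [mul_le_mul_of_nonneg_left (hDu.trans (by linarith :
      Real.Gamma (p:ℝ) + 1 / ((p:ℝ) + 1) ≤ Real.Gamma (p:ℝ) + 1/3)) hGpa.le,
    mul_le_mul_of_nonneg_right hN (by linarith : (0:ℝ) ≤ Real.Gamma (p:ℝ)),
    mul_nonneg hGpa.le (by linarith : (0:ℝ) ≤ Real.Gamma (p:ℝ) - 1)]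
end

section
/- Let π be a log-concave probability density on ℝ^p with second moment μ₂ and, for α > 0, π_α ∝ π(θ)e^{-α‖θ‖₂²/2}. Suppose every coupling is constructed by keeping the common mass fixed and transporting (π-π_α)_+ to (π-π_α)_-. Then for q ≥ 1, W_q^q(π, π_α) ≤ α J_{q,α}(π) where J_{q,α}(π) = (1/2)∫_{‖θ‖₂² > r_α} (‖θ‖₂ + √r_α)^q (‖θ‖₂² - r_α) π(θ) dθ and r_α = (2/α) log(1/c_α) with c_α = E_π[e^{-α‖θ‖₂²/2}]. -/
/-!
Write `π = π ∧ π_α + (π - π_α)₊` and `π_α = π ∧ π_α + (π_α - π)₊`, and couple `π` with `π_α` by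
leaving the common mass `π ∧ π_α` in place and spreading the excess `(π - π_α)₊` proportionally
over the deficit `(π_α - π)₊`; only the second part costs anything. Since
`π_α = π e^{-α(‖θ‖² - r_α)/2}`, the deficit lives in the ball `‖θ'‖² ≤ r_α`, where
`‖θ - θ'‖ ≤ ‖θ‖ + √r_α`, and the excess lives outside it, where
`(π - π_α)₊ ≤ (α/2)(‖θ‖² - r_α) π` because `1 - e^{-x} ≤ x`.
-/

open MeasureTheory Set

/-- Wasserstein-q distance on ℝ^p, defined as an infimum over couplings. -/
noncomputable def Wq {p : ℕ} (q : ℝ)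
    (μ ν : Measure (EuclideanSpace ℝ (Fin p))) : ℝ :=
  sInf {c : ℝ | ∃ γ : Measure (EuclideanSpace ℝ (Fin p) × EuclideanSpace ℝ (Fin p)),
    γ.map Prod.fst = μ ∧ γ.map Prod.snd = ν ∧
    c = (∫ x, ‖x.1 - x.2‖ ^ q ∂γ) ^ (1 / q)}

section Wasserstein

variable {p : ℕ} {q : ℝ} {μ ν : Measure (EuclideanSpace ℝ (Fin p))}
  {γ : Measure (EuclideanSpace ℝ (Fin p) × EuclideanSpace ℝ (Fin p))}

lemma Wq_nonneg : 0 ≤ Wq q μ ν :=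
  Real.sInf_nonneg (by rintro _ ⟨γ, -, -, rfl⟩; positivity)

lemma Wq_le_of_map_fst_of_map_snd (hμ : γ.map Prod.fst = μ) (hν : γ.map Prod.snd = ν) :
    Wq q μ ν ≤ (∫ x, ‖x.1 - x.2‖ ^ q ∂γ) ^ (1 / q) :=
  csInf_le ⟨0, by rintro _ ⟨γ, -, -, rfl⟩; positivity⟩ ⟨γ, hμ, hν, rfl⟩

lemma ofReal_Wq_rpow_le_lintegral (hq : 0 < q) (hμ : γ.map Prod.fst = μ)
    (hν : γ.map Prod.snd = ν) :
    ENNReal.ofReal (Wq q μ ν ^ q) ≤ ∫⁻ x, ENNReal.ofReal (‖x.1 - x.2‖ ^ q) ∂γ := by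
  have hI : 0 ≤ ∫ x, ‖x.1 - x.2‖ ^ q ∂γ := by positivity
  calc ENNReal.ofReal (Wq q μ ν ^ q)
      ≤ ENNReal.ofReal (((∫ x, ‖x.1 - x.2‖ ^ q ∂γ) ^ (1 / q)) ^ q) :=
        ENNReal.ofReal_le_ofReal
          (Real.rpow_le_rpow Wq_nonneg (Wq_le_of_map_fst_of_map_snd hμ hν) hq.le)
    _ = ENNReal.ofReal (∫ x, ‖x.1 - x.2‖ ^ q ∂γ) := by
        rw [← Real.rpow_mul hI, one_div_mul_cancel hq.ne', Real.rpow_one]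
    _ ≤ _ := by
        rw [integral_eq_lintegral_of_nonneg_ae (ae_of_all _ fun _ => by positivity)
          (by fun_prop (disch := exact hq.le))]
        exact ENNReal.ofReal_toReal_le

end Wasserstein

namespace MeasureTheory.Measure

variable {X : Type*} [MeasurableSpace X] {m F G : Measure X} [IsFiniteMeasure G]

-- If `F = 0` the factor `(F univ)⁻¹ = ⊤` is harmless, since then `F.prod G = 0`.
noncomputable def stayOrMoveCoupling (m F G : Measure X) : Measure (X × X) :=
  m.map (fun x => (x, x)) + (F univ)⁻¹ • F.prod G

lemma map_fst_inv_smul_prod (hFG : F univ = G univ) :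
    ((F univ)⁻¹ • F.prod G).map Prod.fst = F := by
  rw [Measure.map_smul, map_fst_prod, smul_smul, ← hFG]
  rcases eq_or_ne (F univ) 0 with h | h
  · simp [measure_univ_eq_zero.mp h]
  · rw [ENNReal.inv_mul_cancel h (hFG ▸ measure_ne_top G univ), one_smul]

lemma map_snd_inv_smul_prod (hFG : F univ = G univ) :
    ((F univ)⁻¹ • F.prod G).map Prod.snd = G := by
  rw [Measure.map_smul, map_snd_prod, smul_smul]
  rcases eq_or_ne (F univ) 0 with h | h
  · simp [measure_univ_eq_zero.mp (hFG ▸ h)]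
  · rw [ENNReal.inv_mul_cancel h (hFG ▸ measure_ne_top G univ), one_smul]

lemma map_fst_stayOrMoveCoupling (hFG : F univ = G univ) :
    (stayOrMoveCoupling m F G).map Prod.fst = m + F := by
  rw [stayOrMoveCoupling, Measure.map_add _ _ measurable_fst,
    map_map measurable_fst (by fun_prop : Measurable fun x : X => (x, x)),
    map_fst_inv_smul_prod hFG]
  simp [Function.comp_def]

lemma map_snd_stayOrMoveCoupling (hFG : F univ = G univ) :
    (stayOrMoveCoupling m F G).map Prod.snd = m + G := by
  rw [stayOrMoveCoupling, Measure.map_add _ _ measurable_snd,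
    map_map measurable_snd (by fun_prop : Measurable fun x : X => (x, x)),
    map_snd_inv_smul_prod hFG]
  simp [Function.comp_def]

lemma lintegral_stayOrMoveCoupling_le (hFG : F univ = G univ) {c : X × X → ENNReal}
    (hc : ∀ x, c (x, x) = 0) {φ : X → ENNReal} (hφ : ∀ x, ∀ᵐ y ∂G, c (x, y) ≤ φ x) :
    ∫⁻ z, c z ∂stayOrMoveCoupling m F G ≤ ∫⁻ x, φ x ∂F := by
  have hdiag : ∫⁻ z, c z ∂m.map (fun x => (x, x)) = 0 :=
    le_antisymm ((lintegral_map_le _ _).trans (by simp [hc])) bot_le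
  have hprod : ∫⁻ z, c z ∂F.prod G ≤ (∫⁻ x, φ x ∂F) * F univ :=
    calc ∫⁻ z, c z ∂F.prod G ≤ ∫⁻ x, ∫⁻ y, c (x, y) ∂G ∂F := lintegral_prod_le c
      _ ≤ ∫⁻ x, φ x * G univ ∂F :=
        lintegral_mono fun x => (lintegral_mono_ae (hφ x)).trans (lintegral_const _).le
      _ = (∫⁻ x, φ x ∂F) * F univ := by
        rw [lintegral_mul_const' _ _ (measure_ne_top G univ), hFG]
  rw [stayOrMoveCoupling, lintegral_add_measure, hdiag, zero_add, lintegral_smul_measure,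
    smul_eq_mul]
  rcases eq_or_ne (F univ) 0 with h | h
  · simp [measure_univ_eq_zero.mp h]
  calc (F univ)⁻¹ * ∫⁻ z, c z ∂F.prod G ≤ (F univ)⁻¹ * ((∫⁻ x, φ x ∂F) * F univ) := by
        gcongr
    _ = ∫⁻ x, φ x ∂F := by
        rw [mul_comm _ (F univ), ENNReal.inv_mul_cancel_left h (hFG ▸ measure_ne_top G univ)]

end MeasureTheory.Measure

section Densities

variable {X : Type*} [MeasurableSpace X] (μ : Measure X) {f g : X → ℝ}

lemma ofReal_min_add_ofReal_posPart {a b : ℝ} (ha : 0 ≤ a) (hb : 0 ≤ b) :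
    ENNReal.ofReal (min a b) + ENNReal.ofReal (max (a - b) 0) = ENNReal.ofReal a := by
  rw [← ENNReal.ofReal_add (le_min ha hb) (le_max_right _ _)]
  congr 1
  rcases le_total a b with h | h
  · rw [min_eq_left h, max_eq_right (sub_nonpos.mpr h), add_zero]
  · rw [min_eq_right h, max_eq_left (sub_nonneg.mpr h), add_sub_cancel]

lemma withDensity_min_add_withDensity_posPart (hf : Measurable f) (hg : Measurable g)
    (hf0 : 0 ≤ f) (hg0 : 0 ≤ g) :
    μ.withDensity (fun x => ENNReal.ofReal (min (f x) (g x)))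
        + μ.withDensity (fun x => ENNReal.ofReal (max (f x - g x) 0))
      = μ.withDensity (fun x => ENNReal.ofReal (f x)) := by
  rw [← withDensity_add_right _ (by fun_prop)]
  congr 1
  funext x
  exact ofReal_min_add_ofReal_posPart (hf0 x) (hg0 x)

lemma withDensity_ofReal_apply_univ (hf : Integrable f μ) (hf0 : 0 ≤ f) :
    μ.withDensity (fun x => ENNReal.ofReal (f x)) univ = ENNReal.ofReal (∫ x, f x ∂μ) := by
  rw [withDensity_apply _ MeasurableSet.univ, setLIntegral_univ,
    ofReal_integral_eq_lintegral_ofReal hf (ae_of_all _ hf0)]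

end Densities

theorem ofReal_Wq_rpow_withDensity_le {p : ℕ} {q : ℝ} (hq : 0 < q)
    {vol : Measure (EuclideanSpace ℝ (Fin p))} {f g : EuclideanSpace ℝ (Fin p) → ℝ}
    (hf : Measurable f) (hg : Measurable g) (hf0 : 0 ≤ f) (hg0 : 0 ≤ g)
    (hfi : Integrable f vol) (hgi : Integrable g vol) (hfg : ∫ θ, f θ ∂vol = ∫ θ, g θ ∂vol)
    {R : ℝ} (hR : ∀ θ, R < ‖θ‖ → g θ ≤ f θ) :
    ENNReal.ofReal (Wq q (vol.withDensity fun θ => ENNReal.ofReal (f θ))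
        (vol.withDensity fun θ => ENNReal.ofReal (g θ)) ^ q)
      ≤ ∫⁻ θ, ENNReal.ofReal (max (f θ - g θ) 0 * (‖θ‖ + R) ^ q) ∂vol := by
  set m := vol.withDensity fun θ => ENNReal.ofReal (min (f θ) (g θ))
  set F := vol.withDensity fun θ => ENNReal.ofReal (max (f θ - g θ) 0)
  set G := vol.withDensity fun θ => ENNReal.ofReal (max (g θ - f θ) 0)
  have hmF : m + F = vol.withDensity fun θ => ENNReal.ofReal (f θ) :=
    withDensity_min_add_withDensity_posPart vol hf hg hf0 hg0
  have hmG : m + G = vol.withDensity fun θ => ENNReal.ofReal (g θ) := by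
    simpa only [min_comm] using withDensity_min_add_withDensity_posPart vol hg hf hg0 hf0
  have : IsFiniteMeasure m :=
    isFiniteMeasure_withDensity_ofReal (hfi.inf hgi).hasFiniteIntegral
  have : IsFiniteMeasure G :=
    isFiniteMeasure_withDensity_ofReal (hgi.sub hfi).pos_part.hasFiniteIntegral
  have hFG : F univ = G univ := by
    refine (ENNReal.add_right_inj (measure_ne_top m univ)).mp ?_
    rw [← Measure.add_apply, ← Measure.add_apply, hmF, hmG,
      withDensity_ofReal_apply_univ vol hfi hf0, withDensity_ofReal_apply_univ vol hgi hg0, hfg]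
  have hG_ball : ∀ᵐ y ∂G, ‖y‖ ≤ R := by
    rw [ae_withDensity_iff (by fun_prop)]
    refine ae_of_all _ fun y hy => not_lt.mp fun hRy => hy ?_
    rw [max_eq_right (sub_nonpos.mpr (hR y hRy)), ENNReal.ofReal_zero]
  calc ENNReal.ofReal (Wq q (vol.withDensity fun θ => ENNReal.ofReal (f θ))
        (vol.withDensity fun θ => ENNReal.ofReal (g θ)) ^ q)
      ≤ ∫⁻ z, ENNReal.ofReal (‖z.1 - z.2‖ ^ q) ∂m.stayOrMoveCoupling F G :=
        ofReal_Wq_rpow_le_lintegral hq ((Measure.map_fst_stayOrMoveCoupling hFG).trans hmF)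
          ((Measure.map_snd_stayOrMoveCoupling hFG).trans hmG)
    _ ≤ ∫⁻ θ, ENNReal.ofReal ((‖θ‖ + R) ^ q) ∂F := by
        refine Measure.lintegral_stayOrMoveCoupling_le hFG (fun x => by simp [hq.ne'])
          fun x => hG_ball.mono fun y hy => ENNReal.ofReal_le_ofReal ?_
        exact Real.rpow_le_rpow (norm_nonneg _) ((norm_sub_le x y).trans (by linarith)) hq.le
    _ = ∫⁻ θ, ENNReal.ofReal (max (f θ - g θ) 0 * (‖θ‖ + R) ^ q) ∂vol := by
        rw [lintegral_withDensity_eq_lintegral_mul _ (by fun_prop)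
          (by fun_prop (disch := exact hq.le))]
        simp only [Pi.mul_apply, ENNReal.ofReal_mul (le_max_right _ _)]

lemma continuous_of_convexOn_neg_log {E : Type*} [NormedAddCommGroup E] [NormedSpace ℝ E]
    [FiniteDimensional ℝ E] {f : E → ℝ} (hpos : ∀ x, 0 < f x)
    (hconv : ConvexOn ℝ univ fun x => -Real.log (f x)) : Continuous f := by
  refine (continuousOn_univ.mp (hconv.continuousOn isOpen_univ)).neg.rexp.congr fun x => ?_
  simp only [Pi.neg_apply, neg_neg, Real.exp_log (hpos x)]

lemma exp_neg_mul_div_eq {α c s : ℝ} (hα : α ≠ 0) (hc : 0 < c) :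
    Real.exp (-α * s / 2) / c = Real.exp (-(α / 2 * (s - 2 / α * Real.log (1 / c)))) := by
  rw [div_eq_mul_inv, ← Real.exp_log (inv_pos.mpr hc), ← Real.exp_add, one_div]
  congr 1
  field_simp
  ring

lemma posPart_sub_mul_exp_neg_le {a x : ℝ} (ha : 0 ≤ a) (hx : 0 ≤ x) :
    max (a - a * Real.exp (-x)) 0 ≤ x * a := by
  refine max_le ?_ (mul_nonneg hx ha)
  nlinarith [Real.add_one_le_exp (-x)]

lemma add_sqrt_rpow_mul_sq_sub_le {q a r : ℝ} (hq : 0 ≤ q) (hr : 0 ≤ r) (ha : 0 ≤ a)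
    (hra : r < a ^ 2) : (a + √r) ^ q * (a ^ 2 - r) ≤ 2 ^ q * a ^ (q + 2) := by
  have hsqrt : √r ≤ a := Real.sqrt_le_iff.mpr ⟨ha, hra.le⟩
  calc (a + √r) ^ q * (a ^ 2 - r) ≤ (2 * a) ^ q * a ^ 2 := by
        gcongr
        · linarith
        · linarith
    _ = 2 ^ q * a ^ (q + 2) := by
        rw [Real.mul_rpow zero_le_two ha, Real.rpow_add' ha (by linarith), Real.rpow_two, mul_assoc]

lemma exp_neg_mul_sq_norm_div_two_le_one {E : Type*} [SeminormedAddGroup E] {α : ℝ} (hα : 0 ≤ α)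
    (θ : E) :
    Real.exp (-α * ‖θ‖ ^ 2 / 2) ≤ 1 :=
  Real.exp_le_one_iff.mpr (div_nonpos_of_nonpos_of_nonneg
    (mul_nonpos_of_nonpos_of_nonneg (neg_nonpos.mpr hα) (sq_nonneg _)) zero_le_two)

section GaussianTilt

variable {E : Type*} [NormedAddCommGroup E] [MeasurableSpace E] [BorelSpace E]
  {μ : Measure E} {π : E → ℝ} {α : ℝ}

lemma integrable_mul_exp_neg_sq_norm (hπ : Integrable π μ) (hα : 0 ≤ α) :
    Integrable (fun θ => π θ * Real.exp (-α * ‖θ‖ ^ 2 / 2)) μ :=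
  hπ.mul_bdd (c := 1) (by fun_prop) (ae_of_all _ fun θ => by
    rw [Real.norm_of_nonneg (Real.exp_nonneg _)]
    exact exp_neg_mul_sq_norm_div_two_le_one hα θ)

lemma integral_mul_exp_neg_sq_norm_mem_Ioc (hπ0 : 0 ≤ π) (hπ : Integrable π μ)
    (hπ1 : ∫ θ, π θ ∂μ = 1) (hα : 0 ≤ α) :
    ∫ θ, π θ * Real.exp (-α * ‖θ‖ ^ 2 / 2) ∂μ ∈ Ioc 0 1 := by
  have hint := integrable_mul_exp_neg_sq_norm hπ hα
  constructor
  · have hpos : 0 < ∫ θ, π θ ∂μ := hπ1 ▸ one_pos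
    rw [integral_pos_iff_support_of_nonneg hπ0 hπ] at hpos
    rw [integral_pos_iff_support_of_nonneg (fun θ => mul_nonneg (hπ0 θ) (Real.exp_nonneg _))
      hint]
    convert hpos using 2
    ext θ
    simp [Real.exp_ne_zero]
  · exact hπ1 ▸ integral_mono hint hπ fun θ =>
      mul_le_of_le_one_right (hπ0 θ) (exp_neg_mul_sq_norm_div_two_le_one hα θ)

lemma integrableOn_add_sqrt_rpow_mul_sq_sub {q r : ℝ} (hq : 0 ≤ q) (hr : 0 ≤ r)
    (hπ : Measurable π) (hπ0 : 0 ≤ π) (hmom : Integrable (fun θ => ‖θ‖ ^ (q + 2) * π θ) μ) :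
    IntegrableOn (fun θ => (‖θ‖ + √r) ^ q * (‖θ‖ ^ 2 - r) * π θ) {θ | r < ‖θ‖ ^ 2} μ := by
  refine (hmom.const_mul (2 ^ q)).restrict.mono'
    (by fun_prop (disch := exact hq) : Measurable _).aestronglyMeasurable ?_
  rw [ae_restrict_iff' (measurableSet_lt measurable_const (by fun_prop))]
  refine ae_of_all _ fun θ hθ => ?_
  have hψ0 : 0 ≤ (‖θ‖ + √r) ^ q * (‖θ‖ ^ 2 - r) :=
    mul_nonneg (by positivity) (sub_nonneg.mpr (le_of_lt hθ))
  rw [Real.norm_of_nonneg (mul_nonneg hψ0 (hπ0 θ)), ← mul_assoc]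
  exact mul_le_mul_of_nonneg_right (add_sqrt_rpow_mul_sq_sub_le hq hr (norm_nonneg θ) hθ) (hπ0 θ)

end GaussianTilt

theorem ofReal_Wq_rpow_tilt_le {p : ℕ} {q α r : ℝ} (hq : 0 < q) (hα : 0 ≤ α)
    {vol : Measure (EuclideanSpace ℝ (Fin p))} {pd pdα : EuclideanSpace ℝ (Fin p) → ℝ}
    (hpd : Measurable pd) (hpd0 : 0 ≤ pd) (hpd_int : Integrable pd vol)
    (hpdα_int : Integrable pdα vol) (hmass : ∫ θ, pd θ ∂vol = ∫ θ, pdα θ ∂vol)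
    (hpdα : ∀ θ, pdα θ = pd θ * Real.exp (-(α / 2 * (‖θ‖ ^ 2 - r)))) :
    ENNReal.ofReal (Wq q (vol.withDensity fun θ => ENNReal.ofReal (pd θ))
        (vol.withDensity fun θ => ENNReal.ofReal (pdα θ)) ^ q)
      ≤ ∫⁻ θ in {θ | r < ‖θ‖ ^ 2},
          ENNReal.ofReal (α / 2 * ((‖θ‖ + √r) ^ q * (‖θ‖ ^ 2 - r) * pd θ)) ∂vol := by
  obtain rfl : pdα = fun θ => pd θ * Real.exp (-(α / 2 * (‖θ‖ ^ 2 - r))) := funext hpdα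
  have hdeficit : ∀ θ, √r < ‖θ‖ → pd θ * Real.exp (-(α / 2 * (‖θ‖ ^ 2 - r))) ≤ pd θ :=
    fun θ hθ => mul_le_of_le_one_right (hpd0 θ) (Real.exp_le_one_iff.mpr (neg_nonpos.mpr
      (mul_nonneg (by positivity) (sub_nonneg.mpr (Real.lt_sq_of_sqrt_lt hθ).le))))
  have hexcess_out : ∀ θ ∉ {θ | r < ‖θ‖ ^ 2},
      max (pd θ - pd θ * Real.exp (-(α / 2 * (‖θ‖ ^ 2 - r)))) 0 = 0 := fun θ hθ =>
    max_eq_right (sub_nonpos.mpr (le_mul_of_one_le_right (hpd0 θ) (Real.one_le_exp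
      (neg_nonneg.mpr (mul_nonpos_of_nonneg_of_nonpos (by positivity)
        (sub_nonpos.mpr (not_lt.mp hθ)))))))
  have hexcess_in : ∀ θ ∈ {θ | r < ‖θ‖ ^ 2},
      max (pd θ - pd θ * Real.exp (-(α / 2 * (‖θ‖ ^ 2 - r)))) 0 * (‖θ‖ + √r) ^ q
        ≤ α / 2 * ((‖θ‖ + √r) ^ q * (‖θ‖ ^ 2 - r) * pd θ) := fun θ hθ =>
    calc max (pd θ - pd θ * Real.exp (-(α / 2 * (‖θ‖ ^ 2 - r)))) 0 * (‖θ‖ + √r) ^ q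
        ≤ α / 2 * (‖θ‖ ^ 2 - r) * pd θ * (‖θ‖ + √r) ^ q := by
          gcongr
          exact posPart_sub_mul_exp_neg_le (hpd0 θ)
            (mul_nonneg (by positivity) (sub_nonneg.mpr (le_of_lt hθ)))
      _ = α / 2 * ((‖θ‖ + √r) ^ q * (‖θ‖ ^ 2 - r) * pd θ) := by ring
  refine (ofReal_Wq_rpow_withDensity_le hq hpd (hpd.mul (by fun_prop)) hpd0
    (fun θ => mul_nonneg (hpd0 θ) (Real.exp_nonneg _)) hpd_int hpdα_int hmass hdeficit).trans ?_
  rw [← setLIntegral_eq_of_support_subset (s := {θ | r < ‖θ‖ ^ 2})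
    (Function.support_subset_iff'.mpr fun θ hθ => by simp [hexcess_out θ hθ])]
  exact setLIntegral_mono (by fun_prop (disch := exact hq.le))
    fun θ hθ => ENNReal.ofReal_le_ofReal (hexcess_in θ hθ)

theorem Wq_rpow_tilt_le {p : ℕ} {q α r : ℝ} (hq : 0 < q) (hα : 0 ≤ α)
    {vol : Measure (EuclideanSpace ℝ (Fin p))} {pd pdα : EuclideanSpace ℝ (Fin p) → ℝ}
    (hpd : Measurable pd) (hpd0 : 0 ≤ pd) (hpd_int : Integrable pd vol)
    (hpdα_int : Integrable pdα vol) (hmass : ∫ θ, pd θ ∂vol = ∫ θ, pdα θ ∂vol)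
    (hpdα : ∀ θ, pdα θ = pd θ * Real.exp (-(α / 2 * (‖θ‖ ^ 2 - r))))
    (hψ : IntegrableOn (fun θ => (‖θ‖ + √r) ^ q * (‖θ‖ ^ 2 - r) * pd θ) {θ | r < ‖θ‖ ^ 2} vol) :
    Wq q (vol.withDensity fun θ => ENNReal.ofReal (pd θ))
        (vol.withDensity fun θ => ENNReal.ofReal (pdα θ)) ^ q
      ≤ α / 2 * ∫ θ in {θ | r < ‖θ‖ ^ 2}, (‖θ‖ + √r) ^ q * (‖θ‖ ^ 2 - r) * pd θ ∂vol := by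
  have hS : MeasurableSet {θ : EuclideanSpace ℝ (Fin p) | r < ‖θ‖ ^ 2} :=
    measurableSet_lt measurable_const (by fun_prop)
  have hψ0 : ∀ θ ∈ {θ : EuclideanSpace ℝ (Fin p) | r < ‖θ‖ ^ 2},
      0 ≤ α / 2 * ((‖θ‖ + √r) ^ q * (‖θ‖ ^ 2 - r) * pd θ) := fun θ hθ =>
    mul_nonneg (by positivity)
      (mul_nonneg (mul_nonneg (by positivity) (sub_nonneg.mpr (le_of_lt hθ))) (hpd0 θ))
  rw [← integral_const_mul, ← ENNReal.ofReal_le_ofReal_iff (setIntegral_nonneg hS hψ0),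
    ofReal_integral_eq_lintegral_ofReal (hψ.const_mul _) ((ae_restrict_iff' hS).mpr
      (ae_of_all _ hψ0))]
  exact ofReal_Wq_rpow_tilt_le hq hα hpd hpd0 hpd_int hpdα_int hmass hpdα

theorem stmt19_general {p : ℕ} (pd pdα : EuclideanSpace ℝ (Fin p) → ℝ) (α q : ℝ)
    (hα : 0 < α) (hq : 1 ≤ q)
    (hpd_pos : ∀ θ, 0 < pd θ)
    (hconv : ConvexOn ℝ Set.univ (fun θ => -Real.log (pd θ)))
    (hpd_int : Integrable pd) (hpd_prob : ∫ θ, pd θ = 1)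
    (hpdα : ∀ θ, pdα θ = pd θ * Real.exp (-α * ‖θ‖ ^ 2 / 2)
      / ∫ θ', pd θ' * Real.exp (-α * ‖θ'‖ ^ 2 / 2))
    (hmom : Integrable (fun θ => ‖θ‖ ^ (q + 2) * pd θ)) :
    (Wq q (volume.withDensity (fun θ => ENNReal.ofReal (pd θ)))
        (volume.withDensity (fun θ => ENNReal.ofReal (pdα θ)))) ^ q
      ≤ α * ((1 / 2) *
          ∫ θ in {θ : EuclideanSpace ℝ (Fin p) |
              (2 / α) * Real.log (1 / ∫ θ', pd θ' * Real.exp (-α * ‖θ'‖ ^ 2 / 2))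
                < ‖θ‖ ^ 2},
            (‖θ‖ + Real.sqrt ((2 / α)
                * Real.log (1 / ∫ θ', pd θ' * Real.exp (-α * ‖θ'‖ ^ 2 / 2)))) ^ q
              * (‖θ‖ ^ 2
                - (2 / α) * Real.log (1 / ∫ θ', pd θ' * Real.exp (-α * ‖θ'‖ ^ 2 / 2)))
              * pd θ) := by
  have hq0 : 0 < q := by linarith
  have hpd0 : 0 ≤ pd := fun θ => (hpd_pos θ).le
  have hpd : Measurable pd := (continuous_of_convexOn_neg_log hpd_pos hconv).measurable
  obtain ⟨hc_pos, hc_le⟩ := integral_mul_exp_neg_sq_norm_mem_Ioc hpd0 hpd_int hpd_prob hα.le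
  set c := ∫ θ', pd θ' * Real.exp (-α * ‖θ'‖ ^ 2 / 2)
  have hr : 0 ≤ 2 / α * Real.log (1 / c) :=
    mul_nonneg (by positivity) (Real.log_nonneg (one_le_one_div hc_pos hc_le))
  have hpdα_int : Integrable pdα :=
    ((integrable_mul_exp_neg_sq_norm hpd_int hα.le).div_const c).congr
      (ae_of_all _ fun θ => (hpdα θ).symm)
  have hmass : ∫ θ, pd θ = ∫ θ, pdα θ := by
    simp_rw [hpdα]
    rw [integral_div, div_self hc_pos.ne', hpd_prob]
  calc _ ≤ α / 2 * _ :=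
        Wq_rpow_tilt_le hq0 hα.le hpd hpd0 hpd_int hpdα_int hmass
          (fun θ => by rw [hpdα, mul_div_assoc, exp_neg_mul_div_eq hα.ne' hc_pos])
          (integrableOn_add_sqrt_rpow_mul_sq_sub hq0.le hr hpd hpd0 hmom)
    _ = _ := by ring

/-- Let pd be a log-concave probability density on ℝ^p and, for
α > 0, pdα ∝ pd(θ)e^{-α‖θ‖²/2}. Then for q ≥ 1,
W_q^q(pd, pdα) ≤ α J_{q,α}(pd), where
J_{q,α}(pd) = (1/2)∫_{‖θ‖² > r_α} (‖θ‖ + √r_α)^q (‖θ‖² - r_α) pd(θ) dθ,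
r_α = (2/α) log(1/c_α) and c_α = E_{pd}[e^{-α‖θ‖²/2}]. -/
theorem stmt19 {p : ℕ} (pd pdα : EuclideanSpace ℝ (Fin p) → ℝ) (α q : ℝ)
    (hα : 0 < α) (hq : 1 ≤ q)
    (hpd_pos : ∀ θ, 0 < pd θ)
    (hconv : ConvexOn ℝ Set.univ (fun θ => -Real.log (pd θ)))
    (hpd_int : Integrable pd) (hpd_prob : ∫ θ, pd θ = 1)
    (hpdα : ∀ θ, pdα θ = pd θ * Real.exp (-α * ‖θ‖ ^ 2 / 2)
      / ∫ θ', pd θ' * Real.exp (-α * ‖θ'‖ ^ 2 / 2))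
    (hmom : Integrable (fun θ => ‖θ‖ ^ (q + 2) * pd θ))
    (hμ₂ : Integrable (fun θ => ‖θ‖ ^ 2 * pd θ)) :
    (Wq q (volume.withDensity (fun θ => ENNReal.ofReal (pd θ)))
        (volume.withDensity (fun θ => ENNReal.ofReal (pdα θ)))) ^ q
      ≤ α * ((1 / 2) *
          ∫ θ in {θ : EuclideanSpace ℝ (Fin p) |
              (2 / α) * Real.log (1 / ∫ θ', pd θ' * Real.exp (-α * ‖θ'‖ ^ 2 / 2))
                < ‖θ‖ ^ 2},
            (‖θ‖ + Real.sqrt ((2 / α)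
                * Real.log (1 / ∫ θ', pd θ' * Real.exp (-α * ‖θ'‖ ^ 2 / 2)))) ^ q
              * (‖θ‖ ^ 2
                - (2 / α) * Real.log (1 / ∫ θ', pd θ' * Real.exp (-α * ‖θ'‖ ^ 2 / 2)))
              * pd θ) :=
  stmt19_general pd pdα α q hα hq hpd_pos hconv hpd_int hpd_prob hpdα hmom
end
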